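/- arXiv:1803.05259 — 13 statements merged into one kernel-verified Lean document; each statement's English description precedes it below -/
import Mathlib

section
/- Let X, (p_i)_{i∈I} be the canonical projective limit of a projective system (p_{ij} : X_j → X_i)_{i⊑j∈I} of topological spaces. For every open subset U of X: (1) for all i ⊑ j, p_{ij}^{-1}(p_i^*(U)) ⊆ p_j^*(U); (2) for all i ⊑ j, p_i^{-1}(p_i^*(U)) ⊆ p_j^{-1}(p_j^*(U)); and (3) U = ⋃_{i∈I} p_i^{-1}(p_i^*(U)), where the union is directed. -/
open Set

universe u v

/-- Specialization preorder: `x ≤ y` iff every open set containing `x` contains `y`. -/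
def specLE {X : Type*} [TopologicalSpace X] (x y : X) : Prop :=
  ∀ U : Set X, IsOpen U → x ∈ U → y ∈ U

/-- Saturated = upward closed in the specialization preorder. -/
def IsSaturatedSet {X : Type*} [TopologicalSpace X] (A : Set X) : Prop :=
  ∀ x ∈ A, ∀ y, specLE x y → y ∈ A

/-- Upward closure in the specialization preorder. -/
def upClo {X : Type*} [TopologicalSpace X] (A : Set X) : Set X :=
  { y | ∃ x ∈ A, specLE x y }

/-- Monotonicity on open sets. -/
def MonoOnOpens {X : Type*} [TopologicalSpace X] (ν : Set X → ENNReal) : Prop :=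
  ∀ U V : Set X, IsOpen U → IsOpen V → U ⊆ V → ν U ≤ ν V

/-- Scott continuity on the lattice of open sets. -/
def ScottContOnOpens {X : Type*} [TopologicalSpace X] (ν : Set X → ENNReal) : Prop :=
  MonoOnOpens ν ∧
  ∀ S : Set (Set X), S.Nonempty → (∀ U ∈ S, IsOpen U) → DirectedOn (· ⊆ ·) S →
    ν (⋃₀ S) = ⨆ U ∈ S, ν U

/-- Valuation: strict, monotone, modular on opens. -/
def IsValuation {X : Type*} [TopologicalSpace X] (ν : Set X → ENNReal) : Prop :=
  ν ∅ = 0 ∧ MonoOnOpens ν ∧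
  ∀ U V : Set X, IsOpen U → IsOpen V → ν (U ∪ V) + ν (U ∩ V) = ν U + ν V

/-- Continuous valuation. -/
def IsContValuation {X : Type*} [TopologicalSpace X] (ν : Set X → ENNReal) : Prop :=
  IsValuation ν ∧ ScottContOnOpens ν

/-- `ν^•(Q)`: infimum of `ν` over open neighborhoods of `Q`. -/
noncomputable def nuBullet {X : Type*} [TopologicalSpace X] (ν : Set X → ENNReal)
    (Q : Set X) : ENNReal :=
  ⨅ U ∈ {U : Set X | IsOpen U ∧ Q ⊆ U}, ν U

/-- `μ^∘(U)`: supremum of `μ` over compact saturated subsets of `U`. -/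
noncomputable def muCirc {X : Type*} [TopologicalSpace X] (μ : Set X → ENNReal)
    (U : Set X) : ENNReal :=
  ⨆ Q ∈ {Q : Set X | IsCompact Q ∧ IsSaturatedSet Q ∧ Q ⊆ U}, μ Q

/-- Tightness of a map on opens (`r ≪ s` in `[0,∞]` iff `r = 0` or `r < s`). -/
def TightMap {X : Type*} [TopologicalSpace X] (ν : Set X → ENNReal) : Prop :=
  ∀ U : Set X, IsOpen U → ∀ r : ENNReal, (r = 0 ∨ r < ν U) →
    ∃ Q : Set X, IsCompact Q ∧ IsSaturatedSet Q ∧ Q ⊆ U ∧ r ≤ nuBullet ν Q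

/-- The canonical projective limit of a projective system of topological spaces. -/
abbrev projLim {I : Type u} [Preorder I] (X : I → Type v) [∀ i, TopologicalSpace (X i)]
    (p : ∀ i j : I, i ≤ j → X j → X i) : Type (max u v) :=
  { x : ∀ i, X i // ∀ (i j : I) (h : i ≤ j), p i j h (x j) = x i }

/-- properties of the largest opens `p_i^*(U)`. -/
theorem stmt1 {I : Type u} [Preorder I] [IsDirected I (· ≤ ·)] [Nonempty I]
    (X : I → Type v) [∀ i, TopologicalSpace (X i)]
    (p : ∀ i j : I, i ≤ j → X j → X i)
    (hpcont : ∀ (i j : I) (h : i ≤ j), Continuous (p i j h))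
    (hpid : ∀ (i : I) (x : X i), p i i le_rfl x = x)
    (hpcomp : ∀ (i j k : I) (hij : i ≤ j) (hjk : j ≤ k) (x : X k),
      p i j hij (p j k hjk x) = p i k (hij.trans hjk) x)
    (U : Set (projLim X p)) (hU : IsOpen U)
    (Ustar : ∀ i, Set (X i))
    (hstar : ∀ i : I, IsOpen (Ustar i) ∧
      ∀ W : Set (X i), IsOpen W →
        (((fun x : projLim X p => x.1 i) ⁻¹' W ⊆ U) ↔ W ⊆ Ustar i)) :
    (∀ (i j : I) (h : i ≤ j), p i j h ⁻¹' Ustar i ⊆ Ustar j) ∧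
    (∀ (i j : I), i ≤ j →
      (fun x : projLim X p => x.1 i) ⁻¹' Ustar i ⊆
        (fun x : projLim X p => x.1 j) ⁻¹' Ustar j) ∧
    DirectedOn (· ⊆ ·)
      (Set.range fun i : I => (fun x : projLim X p => x.1 i) ⁻¹' Ustar i) ∧
    U = ⋃ i : I, (fun x : projLim X p => x.1 i) ⁻¹' Ustar i := by
  -- basic consequences of the Galois property
  have hopen : ∀ i, IsOpen (Ustar i) := fun i => (hstar i).1
  have hsub : ∀ i : I, (fun x : projLim X p => x.1 i) ⁻¹' Ustar i ⊆ U := fun i =>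
    ((hstar i).2 (Ustar i) (hopen i)).mpr (subset_refl _)
  have h1 : ∀ (i j : I) (h : i ≤ j), p i j h ⁻¹' Ustar i ⊆ Ustar j := by
    intro i j h
    refine ((hstar j).2 _ ((hopen i).preimage (hpcont i j h))).mp ?_
    intro x hx
    have : x.1 i ∈ Ustar i := by
      have := x.2 i j h
      simpa [this] using hx
    exact hsub i this
  have h2 : ∀ (i j : I), i ≤ j →
      (fun x : projLim X p => x.1 i) ⁻¹' Ustar i ⊆
        (fun x : projLim X p => x.1 j) ⁻¹' Ustar j := by
    intro i j h x hx
    apply h1 i j h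
    show p i j h (x.1 j) ∈ Ustar i
    rw [x.2 i j h]; exact hx
  refine ⟨h1, h2, ?_, ?_⟩
  · rintro _ ⟨i, rfl⟩ _ ⟨j, rfl⟩
    obtain ⟨k, hik, hjk⟩ := directed_of (· ≤ ·) i j
    exact ⟨_, ⟨k, rfl⟩, h2 i k hik, h2 j k hjk⟩
  · apply Set.Subset.antisymm
    · intro x hx
      -- U is open in the subtype of the product
      obtain ⟨V, hV, rfl⟩ := isOpen_induced_iff.mp hU
      have hxV : x.1 ∈ V := hx
      obtain ⟨s, u, hu, hsub'⟩ := isOpen_pi_iff.mp hV x.1 hxV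
      obtain ⟨j, hj⟩ := s.exists_le
      set W : Set (X j) := ⋂ i : {i // i ∈ s}, p i j (hj i i.2) ⁻¹' u i with hW
      have hWopen : IsOpen W := isOpen_iInter_of_finite fun i =>
        ((hu i i.2).1.preimage (hpcont i j (hj i i.2)))
      have hWU : (fun x : projLim X p => x.1 j) ⁻¹' W ⊆ Subtype.val ⁻¹' V := by
        intro y hy
        apply hsub'
        intro i hi
        have := Set.mem_iInter.mp hy ⟨i, hi⟩
        have heq := y.2 i j (hj i hi)
        simpa [heq] using this
      have hWstar : W ⊆ Ustar j := ((hstar j).2 W hWopen).mp hWU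
      refine Set.mem_iUnion.mpr ⟨j, ?_⟩
      apply hWstar
      refine Set.mem_iInter.mpr fun i => ?_
      show p i j _ (x.1 j) ∈ u i
      rw [x.2 i j (hj i i.2)]
      exact (hu i i.2).2
    · exact Set.iUnion_subset hsub
end

section
/- Let X, (p_i)_{i∈I} be a projective limit of a projective system (p_{ij} : X_j → X_i)_{i⊑j∈I} of topological spaces, and let ν_i : 𝒪(X_i) → [0,∞] be Scott-continuous maps such that ν_i = p_{ij}[ν_j] for all i ⊑ j. Then there is at most one Scott-continuous map ν : 𝒪(X) → [0,∞] such that ν_i = p_i[ν] for every i ∈ I. -/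
open Set

universe u v

/-- uniqueness of a Scott-continuous map on the projective limit whose
images under the projections are the given compatible Scott-continuous maps. -/
theorem stmt2 {I : Type u} [Preorder I] [IsDirected I (· ≤ ·)] [Nonempty I]
    (X : I → Type v) [∀ i, TopologicalSpace (X i)]
    (p : ∀ i j : I, i ≤ j → X j → X i)
    (hpcont : ∀ (i j : I) (h : i ≤ j), Continuous (p i j h))
    (hpid : ∀ (i : I) (x : X i), p i i le_rfl x = x)
    (hpcomp : ∀ (i j k : I) (hij : i ≤ j) (hjk : j ≤ k) (x : X k),
      p i j hij (p j k hjk x) = p i k (hij.trans hjk) x)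
    (ν : ∀ i : I, Set (X i) → ENNReal)
    (hν : ∀ i, ScottContOnOpens (ν i))
    (hcompat : ∀ (i j : I) (h : i ≤ j) (V : Set (X i)), IsOpen V →
      ν i V = ν j (p i j h ⁻¹' V))
    (μ₁ μ₂ : Set (projLim X p) → ENNReal)
    (h₁ : ScottContOnOpens μ₁) (h₂ : ScottContOnOpens μ₂)
    (hp₁ : ∀ (i : I) (V : Set (X i)), IsOpen V →
      ν i V = μ₁ ((fun x : projLim X p => x.1 i) ⁻¹' V))
    (hp₂ : ∀ (i : I) (V : Set (X i)), IsOpen V →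
      ν i V = μ₂ ((fun x : projLim X p => x.1 i) ⁻¹' V)) :
    ∀ U : Set (projLim X p), IsOpen U → μ₁ U = μ₂ U := by
  intro U hU
  set π : ∀ i : I, projLim X p → X i := fun i x => x.1 i with hπ
  have hπcont : ∀ i, Continuous (π i) :=
    fun i => (continuous_apply i).comp continuous_subtype_val
  have hpre : ∀ (i k : I) (h : i ≤ k) (V : Set (X i)),
      π i ⁻¹' V = π k ⁻¹' (p i k h ⁻¹' V) := by
    intro i k h V
    ext x
    simp only [Set.mem_preimage, π, x.2 i k h]
  set S : Set (Set (projLim X p)) :=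
    {W | ∃ i : I, ∃ V : Set (X i), IsOpen V ∧ W = π i ⁻¹' V ∧ W ⊆ U} with hS
  have hopen : ∀ W ∈ S, IsOpen W := by
    rintro W ⟨i, V, hV, rfl, -⟩
    exact hV.preimage (hπcont i)
  have hSne : S.Nonempty := by
    obtain ⟨i⟩ := ‹Nonempty I›
    refine ⟨∅, i, ∅, isOpen_empty, ?_, by simp⟩
    simp
  have hdir : DirectedOn (· ⊆ ·) S := by
    rintro W₁ ⟨i, V₁, hV₁, rfl, hW₁⟩ W₂ ⟨j, V₂, hV₂, rfl, hW₂⟩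
    obtain ⟨k, hik, hjk⟩ := directed_of (· ≤ ·) i j
    refine ⟨π k ⁻¹' (p i k hik ⁻¹' V₁ ∪ p j k hjk ⁻¹' V₂), ?_, ?_, ?_⟩
    · refine ⟨k, _, ((hV₁.preimage (hpcont i k hik)).union
        (hV₂.preimage (hpcont j k hjk))), rfl, ?_⟩
      rw [Set.preimage_union, ← hpre i k hik, ← hpre j k hjk]
      exact Set.union_subset hW₁ hW₂
    · rw [Set.preimage_union, ← hpre i k hik]; exact Set.subset_union_left
    · rw [Set.preimage_union, ← hpre j k hjk]; exact Set.subset_union_right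
  have hU' : U = ⋃₀ S := by
    apply Set.Subset.antisymm
    · intro x hx
      obtain ⟨T, hT, hTU⟩ := isOpen_induced_iff.mp hU
      have hxT : x.1 ∈ T := by rw [← hTU] at hx; exact hx
      obtain ⟨F, V, hV, hsub⟩ := isOpen_pi_iff.mp hT x.1 hxT
      obtain ⟨k, hk⟩ := F.exists_le
      refine ⟨π k ⁻¹' (⋂ i : F, p i k (hk i i.2) ⁻¹' V i), ?_, ?_⟩
      · refine ⟨k, _, ?_, rfl, ?_⟩
        · exact isOpen_iInter_of_finite fun i =>
            ((hV i i.2).1.preimage (hpcont i k (hk i i.2)))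
        · intro y hy
          rw [← hTU]
          apply hsub
          rw [Set.mem_pi]
          intro i hi
          simp only [Set.mem_preimage, Set.mem_iInter] at hy
          have := hy ⟨i, hi⟩
          rw [y.2 i k (hk i hi)] at this
          exact this
      · simp only [Set.mem_preimage, Set.mem_iInter]
        intro i
        rw [x.2 i k (hk i i.2)]
        exact (hV i i.2).2
    · refine Set.sUnion_subset fun W hW => ?_
      obtain ⟨i, V, hV, rfl, h⟩ := hW
      exact h
  have hagree : ∀ W ∈ S, μ₁ W = μ₂ W := by
    rintro W ⟨i, V, hV, rfl, -⟩
    rw [← hp₁ i V hV, ← hp₂ i V hV]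
  rw [hU', h₁.2 S hSne hopen hdir, h₂.2 S hSne hopen hdir]
  exact iSup_congr fun W => iSup_congr fun hW => hagree W hW
end

section
/- Let X, (p_i)_{i∈I} be a projective limit of a projective system of topological spaces, and let ν_i be continuous valuations on X_i with ν_i = p_{ij}[ν_j] for all i ⊑ j. If a Scott-continuous map ν : 𝒪(X) → [0,∞] exists with ν_i = p_i[ν] for all i, then ν is a continuous valuation (i.e., ν is also strict and modular). -/
open Set

universe u v

/-- if the given compatible maps are continuous valuations and a
Scott-continuous map ν on the limit projects onto them, then ν is a continuous valuation. -/
theorem stmt3 {I : Type u} [Preorder I] [IsDirected I (· ≤ ·)] [Nonempty I]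
    (X : I → Type v) [∀ i, TopologicalSpace (X i)]
    (p : ∀ i j : I, i ≤ j → X j → X i)
    (hpcont : ∀ (i j : I) (h : i ≤ j), Continuous (p i j h))
    (hpid : ∀ (i : I) (x : X i), p i i le_rfl x = x)
    (hpcomp : ∀ (i j k : I) (hij : i ≤ j) (hjk : j ≤ k) (x : X k),
      p i j hij (p j k hjk x) = p i k (hij.trans hjk) x)
    (ν : ∀ i : I, Set (X i) → ENNReal)
    (hν : ∀ i, IsContValuation (ν i))
    (hcompat : ∀ (i j : I) (h : i ≤ j) (V : Set (X i)), IsOpen V →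
      ν i V = ν j (p i j h ⁻¹' V))
    (μ : Set (projLim X p) → ENNReal)
    (hμ : ScottContOnOpens μ)
    (hpμ : ∀ (i : I) (V : Set (X i)), IsOpen V →
      ν i V = μ ((fun x : projLim X p => x.1 i) ⁻¹' V)) :
    IsContValuation μ := by
    classical
  set π : ∀ i : I, projLim X p → X i := fun i x => x.1 i with hπdef
  have hπcont : ∀ i, Continuous (π i) := fun i =>
    (continuous_apply i).comp continuous_subtype_val
  -- cylinder opens
  set Cyl : Set (Set (projLim X p)) :=
    {A | ∃ (i : I) (V : Set (X i)), IsOpen V ∧ A = π i ⁻¹' V} with hCyldef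
  have hlift : ∀ (i k : I) (h : i ≤ k) (V : Set (X i)),
      π i ⁻¹' V = π k ⁻¹' (p i k h ⁻¹' V) := by
    intro i k h V
    ext x
    simp only [Set.mem_preimage, π]
    rw [x.2 i k h]
  have hCylOpen : ∀ A ∈ Cyl, IsOpen A := by
    rintro A ⟨i, V, hV, rfl⟩
    exact hV.preimage (hπcont i)
  have hCylPair : ∀ A ∈ Cyl, ∀ B ∈ Cyl, ∃ (k : I) (V W : Set (X k)),
      IsOpen V ∧ IsOpen W ∧ A = π k ⁻¹' V ∧ B = π k ⁻¹' W := by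
    rintro A ⟨i, V, hV, rfl⟩ B ⟨j, W, hW, rfl⟩
    obtain ⟨k, hik, hjk⟩ := directed_of (· ≤ ·) i j
    exact ⟨k, _, _, hV.preimage (hpcont i k hik), hW.preimage (hpcont j k hjk),
      hlift i k hik V, hlift j k hjk W⟩
  have hCylUnion : ∀ A ∈ Cyl, ∀ B ∈ Cyl, A ∪ B ∈ Cyl := by
    intro A hA B hB
    obtain ⟨k, V, W, hV, hW, rfl, rfl⟩ := hCylPair A hA B hB
    exact ⟨k, V ∪ W, hV.union hW, (Set.preimage_union).symm⟩
  have hCylInter : ∀ A ∈ Cyl, ∀ B ∈ Cyl, A ∩ B ∈ Cyl := by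
    intro A hA B hB
    obtain ⟨k, V, W, hV, hW, rfl, rfl⟩ := hCylPair A hA B hB
    exact ⟨k, V ∩ W, hV.inter hW, (Set.preimage_inter).symm⟩
  have hCylEmpty : (∅ : Set (projLim X p)) ∈ Cyl := by
    obtain ⟨i⟩ := (inferInstance : Nonempty I)
    exact ⟨i, ∅, isOpen_empty, by simp⟩
  -- modularity on cylinders
  have hμCyl : ∀ A ∈ Cyl, ∀ B ∈ Cyl, μ (A ∪ B) + μ (A ∩ B) = μ A + μ B := by
    intro A hA B hB
    obtain ⟨k, V, W, hV, hW, rfl, rfl⟩ := hCylPair A hA B hB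
    rw [← Set.preimage_union, ← Set.preimage_inter,
      ← hpμ k _ (hV.union hW), ← hpμ k _ (hV.inter hW), ← hpμ k V hV, ← hpμ k W hW]
    exact (hν k).1.2.2 V W hV hW
  -- strictness
  have hμempty : μ ∅ = 0 := by
    obtain ⟨i⟩ := (inferInstance : Nonempty I)
    have := hpμ i ∅ isOpen_empty
    simp only [Set.preimage_empty] at this
    rw [← this]
    exact (hν i).1.1
  -- every open is the union of the cylinders it contains
  have hbasis : ∀ U : Set (projLim X p), IsOpen U →
      ⋃₀ {A | A ∈ Cyl ∧ A ⊆ U} = U := by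
    intro U hU
    apply subset_antisymm
    · exact Set.sUnion_subset fun A hA => hA.2
    · intro x hx
      obtain ⟨t, ht, rfl⟩ := isOpen_induced_iff.mp hU
      obtain ⟨F, u, hu, hFsub⟩ := (isOpen_pi_iff.mp ht) x.1 hx
      obtain ⟨k, hk⟩ := F.exists_le
      set g : I → Set (X k) := fun f =>
        if h : f ∈ F then p f k (hk f h) ⁻¹' u f else Set.univ with hgdef
      have hgopen : ∀ f ∈ F, IsOpen (g f) := by
        intro f hf
        simp only [hgdef, dif_pos hf]
        exact (hu f hf).1.preimage (hpcont f k (hk f hf))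
      refine ⟨π k ⁻¹' (⋂ f ∈ F, g f), ⟨⟨k, _, isOpen_biInter_finset hgopen, rfl⟩, ?_⟩, ?_⟩
      · intro y hy
        apply hFsub
        intro f hf
        have hf' : f ∈ F := hf
        have hyg : y.1 k ∈ g f := by
          have := hy
          simp only [Set.mem_preimage, Set.mem_iInter] at this
          exact this f hf'
        rw [hgdef] at hyg
        simp only [dif_pos hf', Set.mem_preimage] at hyg
        rwa [y.2 f k (hk f hf')] at hyg
      · simp only [Set.mem_preimage, Set.mem_iInter]
        intro f hf
        simp only [hgdef, dif_pos hf, Set.mem_preimage]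
        rw [x.2 f k (hk f hf)]
        exact (hu f hf).2
  -- μ on an open is the sup over contained cylinders
  have hsup : ∀ U : Set (projLim X p), IsOpen U →
      μ U = ⨆ A ∈ {A | A ∈ Cyl ∧ A ⊆ U}, μ A := by
    intro U hU
    conv_lhs => rw [← hbasis U hU]
    exact hμ.2 _ ⟨∅, hCylEmpty, Set.empty_subset U⟩ (fun A hA => hCylOpen A hA.1)
      (fun A hA B hB => ⟨A ∪ B, ⟨hCylUnion A hA.1 B hB.1, Set.union_subset hA.2 hB.2⟩,
        Set.subset_union_left, Set.subset_union_right⟩)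
  refine ⟨⟨hμempty, hμ.1, ?_⟩, hμ⟩
  intro U V hU hV
  set SU := {A | A ∈ Cyl ∧ A ⊆ U} with hSU
  set SV := {A | A ∈ Cyl ∧ A ⊆ V} with hSV
  have hSUne : ∃ A, A ∈ SU := ⟨∅, hCylEmpty, Set.empty_subset U⟩
  have hSVne : ∃ A, A ∈ SV := ⟨∅, hCylEmpty, Set.empty_subset V⟩
  set S1 := {W | ∃ A ∈ SU, ∃ B ∈ SV, W = A ∪ B} with hS1
  set S2 := {W | ∃ A ∈ SU, ∃ B ∈ SV, W = A ∩ B} with hS2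
  have hS1eq : μ (U ∪ V) = ⨆ W ∈ S1, μ W := by
    have hun : ⋃₀ S1 = U ∪ V := by
      apply subset_antisymm
      · rintro x ⟨W, ⟨A, hA, B, hB, rfl⟩, hx⟩
        rcases hx with hx | hx
        · exact Or.inl (hA.2 hx)
        · exact Or.inr (hB.2 hx)
      · rintro x (hx | hx)
        · have : x ∈ ⋃₀ SU := by rw [hSU, hbasis U hU]; exact hx
          obtain ⟨A, hA, hxA⟩ := this
          exact ⟨A ∪ ∅, ⟨A, hA, ∅, ⟨hCylEmpty, Set.empty_subset V⟩, rfl⟩, Or.inl hxA⟩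
        · have : x ∈ ⋃₀ SV := by rw [hSV, hbasis V hV]; exact hx
          obtain ⟨B, hB, hxB⟩ := this
          exact ⟨∅ ∪ B, ⟨∅, ⟨hCylEmpty, Set.empty_subset U⟩, B, hB, rfl⟩, Or.inr hxB⟩
    conv_lhs => rw [← hun]
    refine hμ.2 _ ⟨∅ ∪ ∅, ∅, ⟨hCylEmpty, Set.empty_subset U⟩, ∅,
      ⟨hCylEmpty, Set.empty_subset V⟩, rfl⟩ ?_ ?_
    · rintro W ⟨A, hA, B, hB, rfl⟩
      exact (hCylOpen A hA.1).union (hCylOpen B hB.1)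
    · rintro W ⟨A, hA, B, hB, rfl⟩ W' ⟨A', hA', B', hB', rfl⟩
      refine ⟨(A ∪ A') ∪ (B ∪ B'),
        ⟨A ∪ A', ⟨hCylUnion A hA.1 A' hA'.1, Set.union_subset hA.2 hA'.2⟩,
         B ∪ B', ⟨hCylUnion B hB.1 B' hB'.1, Set.union_subset hB.2 hB'.2⟩, rfl⟩, ?_, ?_⟩
      · exact Set.union_subset_union Set.subset_union_left Set.subset_union_left
      · exact Set.union_subset_union Set.subset_union_right Set.subset_union_right
  have hS2eq : μ (U ∩ V) = ⨆ W ∈ S2, μ W := by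
    have hun : ⋃₀ S2 = U ∩ V := by
      apply subset_antisymm
      · rintro x ⟨W, ⟨A, hA, B, hB, rfl⟩, hx⟩
        exact ⟨hA.2 hx.1, hB.2 hx.2⟩
      · rintro x ⟨hxU, hxV⟩
        have h1 : x ∈ ⋃₀ SU := by rw [hSU, hbasis U hU]; exact hxU
        have h2 : x ∈ ⋃₀ SV := by rw [hSV, hbasis V hV]; exact hxV
        obtain ⟨A, hA, hxA⟩ := h1
        obtain ⟨B, hB, hxB⟩ := h2
        exact ⟨A ∩ B, ⟨A, hA, B, hB, rfl⟩, hxA, hxB⟩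
    conv_lhs => rw [← hun]
    refine hμ.2 _ ⟨∅ ∩ ∅, ∅, ⟨hCylEmpty, Set.empty_subset U⟩, ∅,
      ⟨hCylEmpty, Set.empty_subset V⟩, rfl⟩ ?_ ?_
    · rintro W ⟨A, hA, B, hB, rfl⟩
      exact (hCylOpen A hA.1).inter (hCylOpen B hB.1)
    · rintro W ⟨A, hA, B, hB, rfl⟩ W' ⟨A', hA', B', hB', rfl⟩
      refine ⟨(A ∪ A') ∩ (B ∪ B'),
        ⟨A ∪ A', ⟨hCylUnion A hA.1 A' hA'.1, Set.union_subset hA.2 hA'.2⟩,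
         B ∪ B', ⟨hCylUnion B hB.1 B' hB'.1, Set.union_subset hB.2 hB'.2⟩, rfl⟩, ?_, ?_⟩
      · exact Set.inter_subset_inter Set.subset_union_left Set.subset_union_left
      · exact Set.inter_subset_inter Set.subset_union_right Set.subset_union_right
  apply le_antisymm
  · -- μ (U ∪ V) + μ (U ∩ V) ≤ μ U + μ V
    rw [hS1eq, hS2eq]
    have h1ne : S1.Nonempty :=
      ⟨∅ ∪ ∅, ∅, ⟨hCylEmpty, Set.empty_subset U⟩, ∅, ⟨hCylEmpty, Set.empty_subset V⟩, rfl⟩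
    have h2ne : S2.Nonempty :=
      ⟨∅ ∩ ∅, ∅, ⟨hCylEmpty, Set.empty_subset U⟩, ∅, ⟨hCylEmpty, Set.empty_subset V⟩, rfl⟩
    refine ENNReal.biSup_add_biSup_le h1ne h2ne ?_
    rintro W ⟨A, hA, B, hB, rfl⟩ W' ⟨A', hA', B', hB', rfl⟩
    have hAA' := hCylUnion A hA.1 A' hA'.1
    have hBB' := hCylUnion B hB.1 B' hB'.1
    calc μ (A ∪ B) + μ (A' ∩ B')
        ≤ μ ((A ∪ A') ∪ (B ∪ B')) + μ ((A ∪ A') ∩ (B ∪ B')) := by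
          refine add_le_add ?_ ?_
          · exact hμ.1 _ _ ((hCylOpen A hA.1).union (hCylOpen B hB.1))
              ((hCylOpen _ hAA').union (hCylOpen _ hBB'))
              (Set.union_subset_union Set.subset_union_left Set.subset_union_left)
          · exact hμ.1 _ _ ((hCylOpen A' hA'.1).inter (hCylOpen B' hB'.1))
              ((hCylOpen _ hAA').inter (hCylOpen _ hBB'))
              (Set.inter_subset_inter Set.subset_union_right Set.subset_union_right)
      _ = μ (A ∪ A') + μ (B ∪ B') := hμCyl _ hAA' _ hBB'
      _ ≤ μ U + μ V := add_le_add
          (hμ.1 _ _ (hCylOpen _ hAA') hU (Set.union_subset hA.2 hA'.2))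
          (hμ.1 _ _ (hCylOpen _ hBB') hV (Set.union_subset hB.2 hB'.2))
  · -- μ U + μ V ≤ μ (U ∪ V) + μ (U ∩ V)
    rw [hsup U hU, hsup V hV]
    have hSUne' : SU.Nonempty := hSUne
    have hSVne' : SV.Nonempty := hSVne
    refine ENNReal.biSup_add_biSup_le hSUne' hSVne' ?_
    intro A hA B hB
    calc μ A + μ B = μ (A ∪ B) + μ (A ∩ B) := (hμCyl A hA.1 B hB.1).symm
      _ ≤ μ (U ∪ V) + μ (U ∩ V) := add_le_add
          (hμ.1 _ _ ((hCylOpen A hA.1).union (hCylOpen B hB.1)) (hU.union hV)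
            (Set.union_subset_union hA.2 hB.2))
          (hμ.1 _ _ ((hCylOpen A hA.1).inter (hCylOpen B hB.1)) (hU.inter hV)
            (Set.inter_subset_inter hA.2 hB.2))
end

section
/- Let (X_i, (p_{ij}, e_{ij}))_{i⊑j∈I} be an ep-system in Top over a directed preordered set I, with canonical projective limit X and projections p_i. Then there exist continuous maps e_i : X_i → X, defined componentwise by e_i(x)_j = p_{jk}(e_{ik}(x)) for any k above i and j, such that each (e_i, p_i) is an embedding-projection pair (p_i ∘ e_i = id and e_i ∘ p_i ≤ id_X). -/
open Set

universe u v

/-- existence of the induced embeddings `e_i : X_i → X` into the canonical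
projective limit of an ep-system, defined componentwise by `e_i(x)_j = p_{jk}(e_{ik}(x))`,
forming ep-pairs with the projections. -/
theorem stmt5 {I : Type u} [Preorder I] [IsDirected I (· ≤ ·)] [Nonempty I]
    (X : I → Type v) [∀ i, TopologicalSpace (X i)]
    (p : ∀ i j : I, i ≤ j → X j → X i)
    (hpcont : ∀ (i j : I) (h : i ≤ j), Continuous (p i j h))
    (hpid : ∀ (i : I) (x : X i), p i i le_rfl x = x)
    (hpcomp : ∀ (i j k : I) (hij : i ≤ j) (hjk : j ≤ k) (x : X k),
      p i j hij (p j k hjk x) = p i k (hij.trans hjk) x)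
    (e : ∀ i j : I, i ≤ j → X i → X j)
    (hecont : ∀ (i j : I) (h : i ≤ j), Continuous (e i j h))
    (heid : ∀ (i : I) (x : X i), e i i le_rfl x = x)
    (hecomp : ∀ (i j k : I) (hij : i ≤ j) (hjk : j ≤ k) (x : X i),
      e j k hjk (e i j hij x) = e i k (hij.trans hjk) x)
    (hpe : ∀ (i j : I) (h : i ≤ j) (x : X i), p i j h (e i j h x) = x)
    (hep : ∀ (i j : I) (h : i ≤ j) (y : X j), specLE (e i j h (p i j h y)) y) :
    ∃ E : ∀ i : I, X i → projLim X p,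
      (∀ i : I, Continuous (E i)) ∧
      (∀ (i j k : I) (hik : i ≤ k) (hjk : j ≤ k) (x : X i),
        (E i x).1 j = p j k hjk (e i k hik x)) ∧
      (∀ (i : I) (x : X i), (E i x).1 i = x) ∧
      (∀ (i : I) (z : projLim X p), specLE (E i (z.1 i)) z) := by
  classical
  -- choose an upper bound for each pair
  have hub : ∀ i j : I, ∃ k, i ≤ k ∧ j ≤ k := fun i j => directed_of (· ≤ ·) i j
  let K : I → I → I := fun i j => (hub i j).choose
  have hK1 : ∀ i j, i ≤ K i j := fun i j => (hub i j).choose_spec.1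
  have hK2 : ∀ i j, j ≤ K i j := fun i j => (hub i j).choose_spec.2
  -- well-definedness
  have wd : ∀ (i j k k' : I) (hik : i ≤ k) (hjk : j ≤ k) (hik' : i ≤ k') (hjk' : j ≤ k')
      (x : X i), p j k hjk (e i k hik x) = p j k' hjk' (e i k' hik' x) := by
    intro i j k k' hik hjk hik' hjk' x
    obtain ⟨m, hkm, hk'm⟩ := hub k k'
    have h1 : p j k hjk (e i k hik x) = p j m (hjk.trans hkm) (e i m (hik.trans hkm) x) := by
      conv_lhs => rw [← hpe k m hkm (e i k hik x)]
      rw [hpcomp, hecomp]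
    have h2 : p j k' hjk' (e i k' hik' x) = p j m (hjk'.trans hk'm) (e i m (hik'.trans hk'm) x) := by
      conv_lhs => rw [← hpe k' m hk'm (e i k' hik' x)]
      rw [hpcomp, hecomp]
    rw [h1, h2]
  -- the embedding
  refine ⟨fun i x => ⟨fun j => p j (K i j) (hK2 i j) (e i (K i j) (hK1 i j) x), ?_⟩,
    ?_, ?_, ?_, ?_⟩
  · intro j j' hjj'
    show p j j' hjj' (p j' (K i j') (hK2 i j') (e i (K i j') (hK1 i j') x)) = _
    rw [hpcomp]
    exact wd i j (K i j') (K i j) (hK1 i j') (hjj'.trans (hK2 i j')) (hK1 i j) (hK2 i j) x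
  · intro i
    apply Continuous.subtype_mk
    exact continuous_pi fun j => (hpcont _ _ _).comp (hecont _ _ _)
  · intro i j k hik hjk x
    exact wd i j _ k (hK1 i j) (hK2 i j) hik hjk x
  · intro i x
    show p i (K i i) (hK2 i i) (e i (K i i) (hK1 i i) x) = x
    rw [wd i i (K i i) i (hK1 i i) (hK2 i i) le_rfl le_rfl x, heid, hpid]
  · intro i z U hU hz
    -- specialization in the subtype/product
    obtain ⟨V, hV, rfl⟩ := isOpen_induced_iff.mp hU
    have hspec : ∀ j, specLE ((fun j => p j (K i j) (hK2 i j) (e i (K i j) (hK1 i j) (z.1 i))) j) (z.1 j) := by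
      intro j
      have hcomp : p j (K i j) (hK2 i j) (e i (K i j) (hK1 i j) (z.1 i))
          = p j (K i j) (hK2 i j) (e i (K i j) (hK1 i j) (p i (K i j) (hK1 i j) (z.1 (K i j)))) := by
        rw [z.2 i (K i j) (hK1 i j)]
      intro W hW hmem
      have h1 := hep i (K i j) (hK1 i j) (z.1 (K i j))
      have h2 : z.1 (K i j) ∈ (p j (K i j) (hK2 i j)) ⁻¹' W := by
        apply h1 _ (hW.preimage (hpcont _ _ _))
        rw [Set.mem_preimage, ← hcomp]; exact hmem
      have : z.1 j = p j (K i j) (hK2 i j) (z.1 (K i j)) := (z.2 j (K i j) (hK2 i j)).symm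
      rw [this]; exact h2
    -- now lift specialization pointwise to the Pi type
    have hpi : ∀ (W : Set (∀ j, X j)), IsOpen W →
        (fun j => p j (K i j) (hK2 i j) (e i (K i j) (hK1 i j) (z.1 i))) ∈ W → z.1 ∈ W := by
      intro W hW hmem
      set w := (fun j => p j (K i j) (hK2 i j) (e i (K i j) (hK1 i j) (z.1 i))) with hw
      have hsp : z.1 ⤳ w := by
        rw [specializes_pi]
        intro j
        rw [specializes_iff_forall_open]
        exact fun U hU hzU => hspec j U hU hzU
      exact hsp.mem_open hW hmem
    exact hpi V hV hz
end

section
/- In the canonical projective limit X of an ep-system in Top with induced embeddings e_i : X_i → X, for every point x ∈ X the family (e_i(p_i(x)))_{i∈I} is a monotone net in X (with respect to the specialization preorder) whose supremum is x. -/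
open Set

universe u v

/-- in the canonical projective limit of an ep-system, for every point x,
the family (e_i(p_i(x)))_i is a monotone net whose supremum (in the specialization
preorder) is x. -/
theorem stmt6 {I : Type u} [Preorder I] [IsDirected I (· ≤ ·)] [Nonempty I]
    (X : I → Type v) [∀ i, TopologicalSpace (X i)]
    (p : ∀ i j : I, i ≤ j → X j → X i)
    (hpcont : ∀ (i j : I) (h : i ≤ j), Continuous (p i j h))
    (hpid : ∀ (i : I) (x : X i), p i i le_rfl x = x)
    (hpcomp : ∀ (i j k : I) (hij : i ≤ j) (hjk : j ≤ k) (x : X k),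
      p i j hij (p j k hjk x) = p i k (hij.trans hjk) x)
    (e : ∀ i j : I, i ≤ j → X i → X j)
    (hecont : ∀ (i j : I) (h : i ≤ j), Continuous (e i j h))
    (heid : ∀ (i : I) (x : X i), e i i le_rfl x = x)
    (hecomp : ∀ (i j k : I) (hij : i ≤ j) (hjk : j ≤ k) (x : X i),
      e j k hjk (e i j hij x) = e i k (hij.trans hjk) x)
    (hpe : ∀ (i j : I) (h : i ≤ j) (x : X i), p i j h (e i j h x) = x)
    (hep : ∀ (i j : I) (h : i ≤ j) (y : X j), specLE (e i j h (p i j h y)) y)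
    (E : ∀ i : I, X i → projLim X p)
    (hEcont : ∀ i : I, Continuous (E i))
    (hpE : ∀ (i : I) (x : X i), (E i x).1 i = x)
    (hEp : ∀ (i : I) (z : projLim X p), specLE (E i (z.1 i)) z)
    (hEe : ∀ (i j : I) (h : i ≤ j) (x : X i), E j (e i j h x) = E i x)
    (x : projLim X p) :
    (∀ (i j : I), i ≤ j → specLE (E i (x.1 i)) (E j (x.1 j))) ∧
    (∀ i : I, specLE (E i (x.1 i)) x) ∧
    (∀ z : projLim X p, (∀ i : I, specLE (E i (x.1 i)) z) → specLE x z) := by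
  refine ⟨?_, fun i => hEp i x, ?_⟩
  · intro i j hij U hU hx
    have h1 : specLE (e i j hij (p i j hij (x.1 j))) (x.1 j) := hep i j hij (x.1 j)
    have hx1 : p i j hij (x.1 j) = x.1 i := x.2 i j hij
    rw [hx1] at h1
    -- E j (e i j hij (x.1 i)) = E i (x.1 i)
    have h2 : E j (e i j hij (x.1 i)) = E i (x.1 i) := hEe i j hij (x.1 i)
    have : e i j hij (x.1 i) ∈ (E j) ⁻¹' U := by
      simp only [Set.mem_preimage, h2]; exact hx
    exact h1 _ ((hEcont j).isOpen_preimage U hU) this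
  · intro z hz U hU hxU
    -- U is open in the subtype; get V open in the Pi type
    obtain ⟨V, hV, rfl⟩ := isOpen_induced_iff.mp hU
    have hxV : x.1 ∈ V := hxU
    obtain ⟨s, u, hu, hsub⟩ := isOpen_pi_iff.mp hV x.1 hxV
    obtain ⟨i, hi⟩ := s.exists_le
    have hmem : E i (x.1 i) ∈ (Subtype.val ⁻¹' V : Set (projLim X p)) := by
      apply hsub
      intro j hj
      have hji : j ≤ i := hi j hj
      have : (E i (x.1 i)).1 j = x.1 j := by
        have h1 : p j i hji ((E i (x.1 i)).1 i) = (E i (x.1 i)).1 j :=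
          (E i (x.1 i)).2 j i hji
        rw [hpE] at h1
        rw [← h1, x.2 j i hji]
      rw [this]
      exact (hu j hj).2
    exact hz i _ hU hmem
end

section
/- In the canonical projective limit X of an ep-system in Top with induced embeddings e_i, for every open subset U of X, the family ((e_i ∘ p_i)^{-1}(U))_{i∈I} is a monotone net of open subsets of X whose union is exactly U. -/
open Set

universe u v

lemma specLE_map {X Y : Type*} [TopologicalSpace X] [TopologicalSpace Y] {f : X → Y}
    (hf : Continuous f) {x y : X} (h : specLE x y) : specLE (f x) (f y) := by
  intro U hUo hx
  exact h (f ⁻¹' U) (hUo.preimage hf) hx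

/-- for every open U of the canonical projective limit of an ep-system,
the sets ((e_i ∘ p_i)⁻¹(U))_i form a monotone net of opens whose union is U. -/
theorem stmt7 {I : Type u} [Preorder I] [IsDirected I (· ≤ ·)] [Nonempty I]
    (X : I → Type v) [∀ i, TopologicalSpace (X i)]
    (p : ∀ i j : I, i ≤ j → X j → X i)
    (hpcont : ∀ (i j : I) (h : i ≤ j), Continuous (p i j h))
    (hpid : ∀ (i : I) (x : X i), p i i le_rfl x = x)
    (hpcomp : ∀ (i j k : I) (hij : i ≤ j) (hjk : j ≤ k) (x : X k),
      p i j hij (p j k hjk x) = p i k (hij.trans hjk) x)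
    (e : ∀ i j : I, i ≤ j → X i → X j)
    (hecont : ∀ (i j : I) (h : i ≤ j), Continuous (e i j h))
    (heid : ∀ (i : I) (x : X i), e i i le_rfl x = x)
    (hecomp : ∀ (i j k : I) (hij : i ≤ j) (hjk : j ≤ k) (x : X i),
      e j k hjk (e i j hij x) = e i k (hij.trans hjk) x)
    (hpe : ∀ (i j : I) (h : i ≤ j) (x : X i), p i j h (e i j h x) = x)
    (hep : ∀ (i j : I) (h : i ≤ j) (y : X j), specLE (e i j h (p i j h y)) y)
    (E : ∀ i : I, X i → projLim X p)
    (hEcont : ∀ i : I, Continuous (E i))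
    (hpE : ∀ (i : I) (x : X i), (E i x).1 i = x)
    (hEp : ∀ (i : I) (z : projLim X p), specLE (E i (z.1 i)) z)
    (hEe : ∀ (i j : I) (h : i ≤ j) (x : X i), E j (e i j h x) = E i x)
    (U : Set (projLim X p)) (hU : IsOpen U) :
    (∀ i : I, IsOpen ((fun z : projLim X p => E i (z.1 i)) ⁻¹' U)) ∧
    (∀ (i j : I), i ≤ j →
      (fun z : projLim X p => E i (z.1 i)) ⁻¹' U ⊆
        (fun z : projLim X p => E j (z.1 j)) ⁻¹' U) ∧
    (⋃ i : I, (fun z : projLim X p => E i (z.1 i)) ⁻¹' U) = U := by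
  refine ⟨fun i => hU.preimage ((hEcont i).comp ((continuous_apply i).comp continuous_subtype_val)), ?_, ?_⟩
  · intro i j hij z hz
    have h1 : E i (z.1 i) = E j (e i j hij (p i j hij (z.1 j))) := by
      rw [hEe i j hij, z.2 i j hij]
    have h2 : specLE (E j (e i j hij (p i j hij (z.1 j)))) (E j (z.1 j)) :=
      specLE_map (hEcont j) (hep i j hij (z.1 j))
    simp only [Set.mem_preimage] at hz ⊢
    rw [h1] at hz
    exact h2 U hU hz
  · apply Set.eq_of_subset_of_subset
    · rintro z ⟨_, ⟨i, rfl⟩, hz⟩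
      exact hEp i z U hU (Set.mem_preimage.mp hz)
    · intro z hz
      obtain ⟨V, hVo, hUV⟩ := isOpen_induced_iff.mp hU
      have hzV : z.1 ∈ V := by rw [← hUV] at hz; exact hz
      obtain ⟨s, u, hu, hsub⟩ := isOpen_pi_iff.mp hVo z.1 hzV
      obtain ⟨i, hi⟩ := s.exists_le
      refine Set.mem_iUnion.mpr ⟨i, ?_⟩
      show E i (z.1 i) ∈ U
      rw [← hUV]
      show (E i (z.1 i)).1 ∈ V
      apply hsub
      intro j hj
      have hcoord : (E i (z.1 i)).1 j = z.1 j := by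
        rw [← (E i (z.1 i)).2 j i (hi j hj), hpE, z.2 j i (hi j hj)]
      rw [hcoord]
      exact (hu j hj).2
end

section
/- Let X be a topological space, A ⊆ X with inclusion η : A → X, and ν a valuation on X. The following are equivalent: (1) for all open U, V ⊆ X with U ∩ A = V ∩ A, ν(U) = ν(V); (2) there exists a valuation μ on the subspace A with ν = η[μ]. In that case μ is unique, given by μ(U ∩ A) = ν(U); and if ν is continuous then so is μ. -/
open Set

universe u v

lemma stmt9_construct {X : Type u} [TopologicalSpace X] (A : Set X)
    (ν : Set X → ENNReal) (hν : IsValuation ν)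
    (h1 : ∀ U V : Set X, IsOpen U → IsOpen V → U ∩ A = V ∩ A → ν U = ν V) :
    ∃ μ : Set A → ENNReal, IsValuation μ ∧
      (ScottContOnOpens ν → ScottContOnOpens μ) ∧
      ∀ U : Set X, IsOpen U → ν U = μ ((fun a : A => (a : X)) ⁻¹' U) := by
  set c : A → X := fun a : A => (a : X) with hc
  set F : Set A → Set X := fun W => ⋃₀ {U : Set X | IsOpen U ∧ c ⁻¹' U ⊆ W} with hF
  have hFopen : ∀ W, IsOpen (F W) := fun W => isOpen_sUnion (fun U hU => hU.1)
  have hFmono : ∀ W W' : Set A, W ⊆ W' → F W ⊆ F W' := by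
    intro W W' hWW'
    exact sUnion_subset_sUnion (fun U hU => ⟨hU.1, hU.2.trans hWW'⟩)
  have hFpre : ∀ W : Set A, IsOpen W → c ⁻¹' (F W) = W := by
    intro W hW
    apply Subset.antisymm
    · intro a ha
      obtain ⟨U, hU, haU⟩ := ha
      exact hU.2 haU
    · obtain ⟨U, hUo, hUW⟩ := isOpen_induced_iff.mp hW
      intro a ha
      rw [← hUW] at ha
      exact ⟨U, ⟨hUo, hUW.le⟩, ha⟩
  have hkey : ∀ W : Set A, IsOpen W → ∀ V : Set X, IsOpen V → c ⁻¹' V = W →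
      ν V = ν (F W) := by
    intro W hW V hV hVW
    apply h1 V (F W) hV (hFopen W)
    rw [inter_comm V, inter_comm (F W), ← Subtype.preimage_coe_eq_preimage_coe_iff]
    exact hVW.trans (hFpre W hW).symm
  refine ⟨fun W => ν (F W), ⟨?_, ?_, ?_⟩, ?_, ?_⟩
  · -- empty
    have := hkey ∅ isOpen_empty ∅ isOpen_empty (by simp)
    simpa [hν.1] using this.symm
  · intro W W' _ _ hWW'
    exact hν.2.1 _ _ (hFopen W) (hFopen W') (hFmono _ _ hWW')
  · intro W₁ W₂ h₁ h₂
    have hu : ν (F (W₁ ∪ W₂)) = ν (F W₁ ∪ F W₂) := by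
      refine (hkey (W₁ ∪ W₂) (h₁.union h₂) (F W₁ ∪ F W₂)
        ((hFopen W₁).union (hFopen W₂)) ?_).symm
      rw [preimage_union, hFpre W₁ h₁, hFpre W₂ h₂]
    have hi : ν (F (W₁ ∩ W₂)) = ν (F W₁ ∩ F W₂) := by
      refine (hkey (W₁ ∩ W₂) (h₁.inter h₂) (F W₁ ∩ F W₂)
        ((hFopen W₁).inter (hFopen W₂)) ?_).symm
      rw [preimage_inter, hFpre W₁ h₁, hFpre W₂ h₂]
    show ν (F (W₁ ∪ W₂)) + ν (F (W₁ ∩ W₂)) = ν (F W₁) + ν (F W₂)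
    rw [hu, hi]
    exact hν.2.2 (F W₁) (F W₂) (hFopen W₁) (hFopen W₂)
  · intro hsc
    constructor
    · intro W W' _ _ hWW'
      exact hν.2.1 _ _ (hFopen W) (hFopen W') (hFmono _ _ hWW')
    · intro S hSne hSo hSd
      have hT : ν (F (⋃₀ S)) = ν (⋃₀ (F '' S)) := by
        refine (hkey (⋃₀ S) (isOpen_sUnion hSo) (⋃₀ (F '' S))
          (isOpen_sUnion (by rintro _ ⟨W, hW, rfl⟩; exact hFopen W)) ?_).symm
        rw [sUnion_image, preimage_iUnion₂]
        rw [sUnion_eq_biUnion]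
        exact iUnion₂_congr (fun W hW => hFpre W (hSo W hW))
      show ν (F (⋃₀ S)) = ⨆ U ∈ S, ν (F U)
      rw [hT]
      have := hsc.2 (F '' S) (hSne.image F)
        (by rintro _ ⟨W, hW, rfl⟩; exact hFopen W)
        (by rintro _ ⟨W₁, hW₁, rfl⟩ _ ⟨W₂, hW₂, rfl⟩
            obtain ⟨W₃, hW₃, h13, h23⟩ := hSd W₁ hW₁ W₂ hW₂
            exact ⟨F W₃, mem_image_of_mem F hW₃, hFmono _ _ h13, hFmono _ _ h23⟩)
      rw [this, iSup_image]
  · intro U hU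
    exact hkey (c ⁻¹' U) (hU.preimage continuous_subtype_val) U hU rfl

/-- characterization of valuations supported on a subset A, with uniqueness
of the restricted valuation and preservation of continuity. -/
theorem stmt9 {X : Type u} [TopologicalSpace X] (A : Set X)
    (ν : Set X → ENNReal) (hν : IsValuation ν) :
    ((∀ U V : Set X, IsOpen U → IsOpen V → U ∩ A = V ∩ A → ν U = ν V) ↔
      ∃ μ : Set A → ENNReal, IsValuation μ ∧
        ∀ U : Set X, IsOpen U → ν U = μ ((fun a : A => (a : X)) ⁻¹' U)) ∧
    (∀ μ₁ μ₂ : Set A → ENNReal, IsValuation μ₁ → IsValuation μ₂ →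
      (∀ U : Set X, IsOpen U → ν U = μ₁ ((fun a : A => (a : X)) ⁻¹' U)) →
      (∀ U : Set X, IsOpen U → ν U = μ₂ ((fun a : A => (a : X)) ⁻¹' U)) →
      ∀ W : Set A, IsOpen W → μ₁ W = μ₂ W) ∧
    ((∀ U V : Set X, IsOpen U → IsOpen V → U ∩ A = V ∩ A → ν U = ν V) →
      ScottContOnOpens ν →
      ∃ μ : Set A → ENNReal, IsContValuation μ ∧
        ∀ U : Set X, IsOpen U → ν U = μ ((fun a : A => (a : X)) ⁻¹' U)) := by
  refine ⟨⟨fun h1 => ?_, ?_⟩, ?_, ?_⟩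
  · obtain ⟨μ, hval, _, heq⟩ := stmt9_construct A ν hν h1
    exact ⟨μ, hval, heq⟩
  · rintro ⟨μ, hμ, hμν⟩ U V hU hV hUV
    rw [hμν U hU, hμν V hV]
    congr 1
    rw [Subtype.preimage_coe_eq_preimage_coe_iff]
    rw [inter_comm A U, inter_comm A V]
    exact hUV
  · intro μ₁ μ₂ h₁ h₂ e₁ e₂ W hW
    obtain ⟨U, hUo, hUW⟩ := isOpen_induced_iff.mp hW
    have h : (fun a : A => (a : X)) ⁻¹' U = W := hUW
    rw [← h, ← e₁ U hUo, e₂ U hUo]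
  · intro h1 hsc
    obtain ⟨μ, hval, hcont, heq⟩ := stmt9_construct A ν hν h1
    exact ⟨μ, ⟨hval, hcont hsc⟩, heq⟩
end

section
/- Let (X_i)_{i∈I} be an arbitrary family of topological spaces each having a least element in its specialization preorder. For every finite J ⊆ I let X_J = ∏_{i∈J} X_i with projections p_{JJ'} : X_{J'} → X_J for J ⊆ J'. Given continuous valuations ν_J on each X_J with ν_J = p_{JJ'}[ν_{J'}] for all J ⊆ J' finite, there is a unique continuous valuation ν on X = ∏_{i∈I} X_i (product topology) with p_J[ν] = ν_J for every finite J. -/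
open Set

universe u v

section Aux

variable {I : Type u} {X : I → Type v} [∀ i, TopologicalSpace (X i)]

lemma specLE_pi {f g : ∀ i, X i} (h : ∀ i, specLE (f i) (g i)) : specLE f g := by
  intro U hU hf
  rcases isOpen_pi_iff.1 hU f hf with ⟨J, u, h1, h2⟩
  exact h2 fun i hi => h i (u i) (h1 i hi).1 (h1 i hi).2

open Classical in
noncomputable def secJ (bot : ∀ i, X i) (J : Finset I)
    (y : ∀ i : {x : I // x ∈ J}, X i.1) (i : I) : X i :=
  if h : i ∈ J then y ⟨i, h⟩ else bot i

lemma secJ_mem (bot : ∀ i, X i) {J : Finset I}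
    (y : ∀ i : {x : I // x ∈ J}, X i.1) {i : I} (h : i ∈ J) :
    secJ bot J y i = y ⟨i, h⟩ := by unfold secJ; exact dif_pos h

lemma secJ_not_mem (bot : ∀ i, X i) {J : Finset I}
    (y : ∀ i : {x : I // x ∈ J}, X i.1) {i : I} (h : i ∉ J) :
    secJ bot J y i = bot i := by unfold secJ; exact dif_neg h

lemma continuous_secJ (bot : ∀ i, X i) (J : Finset I) : Continuous (secJ bot J) := by
  refine continuous_pi fun i => ?_
  by_cases h : i ∈ J
  · simp only [funext fun y => secJ_mem bot y h]; exact continuous_apply _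
  · simp only [funext fun y => secJ_not_mem bot y h]; exact continuous_const

lemma specLE_secJ (bot : ∀ i, X i) (hbot : ∀ (i : I) (y : X i), specLE (bot i) y)
    (J : Finset I) (y : ∀ i : {x : I // x ∈ J}, X i.1) (x : ∀ i, X i)
    (hy : ∀ (i : I) (h : i ∈ J), y ⟨i, h⟩ = x i) : specLE (secJ bot J y) x := by
  refine specLE_pi fun i => ?_
  by_cases h : i ∈ J
  · rw [secJ_mem bot y h, hy i h]; exact fun U _ m => m
  · rw [secJ_not_mem bot y h]; exact hbot i (x i)

end Aux

/-- Daniell–Kolmogorov for continuous valuations, pointed case: every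
compatible family of continuous valuations on the finite sub-products of a family of
pointed spaces extends uniquely to a continuous valuation on the full product. -/
theorem stmt10 {I : Type u} (X : I → Type v) [∀ i, TopologicalSpace (X i)]
    (bot : ∀ i : I, X i) (hbot : ∀ (i : I) (y : X i), specLE (bot i) y)
    (ν : ∀ J : Finset I, Set (∀ i : {x : I // x ∈ J}, X i.1) → ENNReal)
    (hν : ∀ J : Finset I, IsContValuation (ν J))
    (hcompat : ∀ (J Jp : Finset I) (h : J ⊆ Jp)
      (V : Set (∀ i : {x : I // x ∈ J}, X i.1)), IsOpen V →
      ν J V = ν Jp ((fun (x : ∀ i : {x : I // x ∈ Jp}, X i.1)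
        (i : {x : I // x ∈ J}) => x ⟨i.1, h i.2⟩) ⁻¹' V)) :
    ∃ νX : Set (∀ i : I, X i) → ENNReal, IsContValuation νX ∧
      (∀ (J : Finset I) (V : Set (∀ i : {x : I // x ∈ J}, X i.1)), IsOpen V →
        ν J V = νX ((fun (x : ∀ i : I, X i) (i : {x : I // x ∈ J}) => x i.1) ⁻¹' V)) ∧
      ∀ νXp : Set (∀ i : I, X i) → ENNReal, IsContValuation νXp →
        (∀ (J : Finset I) (V : Set (∀ i : {x : I // x ∈ J}, X i.1)), IsOpen V →
          ν J V = νXp ((fun (x : ∀ i : I, X i) (i : {x : I // x ∈ J}) => x i.1) ⁻¹' V)) →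
        ∀ U : Set (∀ i : I, X i), IsOpen U → νXp U = νX U := by
  
  classical
  have hsopen : ∀ (J : Finset I) (U : Set (∀ i, X i)), IsOpen U →
      IsOpen (secJ bot J ⁻¹' U) := fun J U hU => hU.preimage (continuous_secJ bot J)
  have hpcont : ∀ J : Finset I,
      Continuous (fun (x : ∀ i : I, X i) (i : {x : I // x ∈ J}) => x i.1) :=
    fun J => continuous_pi fun i => continuous_apply i.1
  have hpJcont : ∀ (J Jp : Finset I) (h : J ⊆ Jp),
      Continuous (fun (x : ∀ i : {x : I // x ∈ Jp}, X i.1)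
        (i : {x : I // x ∈ J}) => x ⟨i.1, h i.2⟩) :=
    fun J Jp h => continuous_pi fun i => continuous_apply _
  have hmono : ∀ (U : Set (∀ i, X i)), IsOpen U → ∀ J Jp : Finset I, J ⊆ Jp →
      ν J (secJ bot J ⁻¹' U) ≤ ν Jp (secJ bot Jp ⁻¹' U) := by
    intro U hU J Jp hJ
    rw [hcompat J Jp hJ _ (hsopen J U hU)]
    refine (hν Jp).1.2.1 _ _ ((hsopen J U hU).preimage (hpJcont J Jp hJ))
      (hsopen Jp U hU) ?_
    intro y hy
    refine specLE_secJ bot hbot J _ (secJ bot Jp y) (fun i h => ?_) U hU hy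
    exact (secJ_mem bot y (hJ h)).symm
  set F : Set (∀ i, X i) → ENNReal := fun U => ⨆ J : Finset I, ν J (secJ bot J ⁻¹' U)
    with hF
  have Fmono : MonoOnOpens F := by
    intro U V hU hV hUV
    exact iSup_mono fun J => (hν J).1.2.1 _ _ (hsopen J U hU) (hsopen J V hV)
      (Set.preimage_mono hUV)
  have Fstrict : F ∅ = 0 := by
    have h0 : ∀ J : Finset I, ν J (secJ bot J ⁻¹' (∅ : Set (∀ i, X i))) = 0 := fun J => by
      rw [Set.preimage_empty]; exact (hν J).1.1
    calc F ∅ = ⨆ _ : Finset I, (0 : ENNReal) := iSup_congr h0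
      _ = 0 := by simp
  have Fmod : ∀ U V : Set (∀ i, X i), IsOpen U → IsOpen V →
      F (U ∪ V) + F (U ∩ V) = F U + F V := by
    intro U V hU hV
    simp only [hF]
    have dir : ∀ (W W' : Set (∀ i, X i)), IsOpen W → IsOpen W' →
        ∀ J K : Finset I, ∃ M, ν J (secJ bot J ⁻¹' W) + ν K (secJ bot K ⁻¹' W')
          ≤ ν M (secJ bot M ⁻¹' W) + ν M (secJ bot M ⁻¹' W') :=
      fun W W' hW hW' J K => ⟨J ∪ K,
        add_le_add (hmono W hW J _ Finset.subset_union_left)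
          (hmono W' hW' K _ Finset.subset_union_right)⟩
    rw [ENNReal.iSup_add_iSup (dir _ _ (hU.union hV) (hU.inter hV)),
        ENNReal.iSup_add_iSup (dir _ _ hU hV)]
    refine iSup_congr fun J => ?_
    rw [Set.preimage_union, Set.preimage_inter]
    exact (hν J).1.2.2 _ _ (hsopen J U hU) (hsopen J V hV)
  have Fscott : ∀ S : Set (Set (∀ i, X i)), S.Nonempty → (∀ U ∈ S, IsOpen U) →
      DirectedOn (· ⊆ ·) S → F (⋃₀ S) = ⨆ U ∈ S, F U := by
    intro S hne hop hdir
    have key : ∀ J : Finset I, ν J (secJ bot J ⁻¹' ⋃₀ S)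
        = ⨆ U ∈ S, ν J (secJ bot J ⁻¹' U) := by
      intro J
      have h1 := (hν J).2.2 ((fun U => secJ bot J ⁻¹' U) '' S) (hne.image _)
        (by rintro V ⟨W, hW, rfl⟩; exact hsopen J W (hop W hW))
        (by rintro _ ⟨W, hW, rfl⟩ _ ⟨W', hW', rfl⟩
            obtain ⟨Z, hZ, h1, h2⟩ := hdir W hW W' hW'
            exact ⟨_, Set.mem_image_of_mem _ hZ, Set.preimage_mono h1,
              Set.preimage_mono h2⟩)
      rw [Set.preimage_sUnion, ← Set.sUnion_image, h1, iSup_image]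
    calc F (⋃₀ S) = ⨆ J : Finset I, ⨆ U ∈ S, ν J (secJ bot J ⁻¹' U) :=
          iSup_congr key
      _ = ⨆ U ∈ S, F U := by
          rw [iSup_comm]
          exact iSup_congr fun U => iSup_comm
  have hsec_p : ∀ (J M : Finset I) (hJM : J ⊆ M)
      (V : Set (∀ i : {x : I // x ∈ J}, X i.1)),
      secJ bot M ⁻¹' ((fun (x : ∀ i : I, X i) (i : {x : I // x ∈ J}) => x i.1) ⁻¹' V)
        = (fun (x : ∀ i : {x : I // x ∈ M}, X i.1)
            (i : {x : I // x ∈ J}) => x ⟨i.1, hJM i.2⟩) ⁻¹' V := by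
    intro J M hJM V
    ext y
    simp only [Set.mem_preimage]
    have : (fun (i : {x : I // x ∈ J}) => secJ bot M y i.1)
        = fun (i : {x : I // x ∈ J}) => y ⟨i.1, hJM i.2⟩ :=
      funext fun i => secJ_mem bot y (hJM i.2)
    rw [show (fun (i : {x : I // x ∈ J}) => secJ bot M y i.1) = _ from this]
  have hcof : ∀ (J M : Finset I) (hJM : J ⊆ M)
      (V : Set (∀ i : {x : I // x ∈ J}, X i.1)), IsOpen V →
      ν M (secJ bot M ⁻¹'
        ((fun (x : ∀ i : I, X i) (i : {x : I // x ∈ J}) => x i.1) ⁻¹' V)) = ν J V := by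
    intro J M hJM V hV
    rw [hsec_p J M hJM V, ← hcompat J M hJM V hV]
  have Fcompat : ∀ (J : Finset I) (V : Set (∀ i : {x : I // x ∈ J}, X i.1)), IsOpen V →
      ν J V = F ((fun (x : ∀ i : I, X i) (i : {x : I // x ∈ J}) => x i.1) ⁻¹' V) := by
    intro J V hV
    simp only [hF]
    refine le_antisymm ?_ (iSup_le fun K => ?_)
    · have h := le_iSup (fun K : Finset I => ν K (secJ bot K ⁻¹'
        ((fun (x : ∀ i : I, X i) (i : {x : I // x ∈ J}) => x i.1) ⁻¹' V))) J
      rwa [hcof J J (subset_refl J) V hV] at h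
    · calc ν K (secJ bot K ⁻¹'
            ((fun (x : ∀ i : I, X i) (i : {x : I // x ∈ J}) => x i.1) ⁻¹' V))
          ≤ ν (J ∪ K) (secJ bot (J ∪ K) ⁻¹'
            ((fun (x : ∀ i : I, X i) (i : {x : I // x ∈ J}) => x i.1) ⁻¹' V)) :=
            hmono _ (hV.preimage (hpcont J)) K (J ∪ K) Finset.subset_union_right
        _ = ν J V := hcof J (J ∪ K) Finset.subset_union_left V hV
  refine ⟨F, ⟨⟨Fstrict, Fmono, Fmod⟩, Fmono, Fscott⟩, Fcompat, ?_⟩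
  intro nu' hnu' hcomp' U hU
  set g : Finset I → Set (∀ i, X i) :=
    fun J => (fun (x : ∀ i : I, X i) (i : {x : I // x ∈ J}) => x i.1) ⁻¹'
      (secJ bot J ⁻¹' U) with hg
  have gopen : ∀ J, IsOpen (g J) := fun J => (hsopen J U hU).preimage (hpcont J)
  have gmono : ∀ J K : Finset I, J ⊆ K → g J ⊆ g K := by
    intro J K hJK x hx
    show secJ bot K (fun i => x i.1) ∈ U
    refine specLE_secJ bot hbot J (fun i => x i.1) (secJ bot K fun i => x i.1)
      (fun i h => (secJ_mem bot (fun i : {a : I // a ∈ K} => x i.1) (hJK h)).symm) U hU hx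
  have gU : ⋃₀ Set.range g = U := by
    rw [Set.sUnion_range]
    apply Set.Subset.antisymm
    · refine Set.iUnion_subset fun J x hx => ?_
      exact specLE_secJ bot hbot J (fun i => x i.1) x (fun i h => rfl) U hU hx
    · intro x hx
      rcases isOpen_pi_iff.1 hU x hx with ⟨J, u, h1, h2⟩
      refine Set.mem_iUnion.2 ⟨J, h2 fun i hi => ?_⟩
      show secJ bot J (fun i : {a : I // a ∈ J} => x i.1) i ∈ u i
      rw [show secJ bot J (fun i : {a : I // a ∈ J} => x i.1) i = x i from secJ_mem bot _ hi]
      exact (h1 i hi).2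
  have hsc := hnu'.2.2 (Set.range g) ⟨g ∅, Set.mem_range_self _⟩
    (by rintro V ⟨J, rfl⟩; exact gopen J)
    (by rintro _ ⟨J, rfl⟩ _ ⟨K, rfl⟩
        exact ⟨g (J ∪ K), Set.mem_range_self _, gmono J _ Finset.subset_union_left,
          gmono K _ Finset.subset_union_right⟩)
  rw [gU] at hsc
  rw [hsc, iSup_range]
  simp only [hF, hg]
  exact iSup_congr fun J => (hcomp' J _ (hsopen J U hU)).symm
end

section
/- Let X be a topological space. If a map ν : 𝒪(X) → [0,∞] is tight, then ν is Scott-continuous. -/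
open Set

universe u v

/-- every tight map on the opens of a topological space is Scott-continuous. -/
theorem stmt12 {X : Type u} [TopologicalSpace X] (ν : Set X → ENNReal)
    (hν : TightMap ν) : ScottContOnOpens ν := by
  have hbul : ∀ Q V : Set X, IsOpen V → Q ⊆ V → nuBullet ν Q ≤ ν V := by
    intro Q V hV hQV
    exact biInf_le (f := fun U => ν U) ⟨hV, hQV⟩
  have hmono : MonoOnOpens ν := by
    intro U V hU hV hUV
    refine le_of_forall_lt_imp_le_of_dense fun r hr => ?_
    obtain ⟨Q, _, _, hQU, hrQ⟩ := hν U hU r (Or.inr hr)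
    exact hrQ.trans (hbul Q V hV (hQU.trans hUV))
  refine ⟨hmono, fun S hSne hSopen hdir => ?_⟩
  have hUopen : IsOpen (⋃₀ S) := isOpen_sUnion hSopen
  refine le_antisymm ?_ ?_
  · refine le_of_forall_lt_imp_le_of_dense fun r hr => ?_
    obtain ⟨Q, hQc, _, hQU, hrQ⟩ := hν (⋃₀ S) hUopen r (Or.inr hr)
    have : Nonempty S := hSne.to_subtype
    obtain ⟨⟨V, hVS⟩, hQV⟩ := hQc.elim_directed_cover (fun V : S => (V : Set X))
      (fun V => hSopen V V.2)
      (by rwa [← sUnion_eq_iUnion])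
      (fun ⟨A, hA⟩ ⟨B, hB⟩ => by
        obtain ⟨C, hCS, hAC, hBC⟩ := hdir A hA B hB
        exact ⟨⟨C, hCS⟩, hAC, hBC⟩)
    calc r ≤ nuBullet ν Q := hrQ
      _ ≤ ν V := hbul Q V (hSopen V hVS) hQV
      _ ≤ ⨆ U ∈ S, ν U := le_biSup _ hVS
  · refine iSup₂_le fun V hVS => hmono V _ (hSopen V hVS) hUopen (subset_sUnion_of_mem hVS)
end

section
/- If X is a consonant topological space, then every Scott-continuous map ν : 𝒪(X) → [0,∞] is tight. -/
open Set

universe u v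

/-- A Scott-open family of open subsets of X. -/
def ScottOpenFamily {X : Type u} [TopologicalSpace X] (F : Set (Set X)) : Prop :=
  (∀ U ∈ F, IsOpen U) ∧
  (∀ U V : Set X, IsOpen U → IsOpen V → U ∈ F → U ⊆ V → V ∈ F) ∧
  ∀ S : Set (Set X), S.Nonempty → (∀ U ∈ S, IsOpen U) → DirectedOn (· ⊆ ·) S →
    ⋃₀ S ∈ F → ∃ U ∈ S, U ∈ F

/-- on a consonant space, every Scott-continuous map on opens is tight. -/
theorem stmt14 {X : Type u} [TopologicalSpace X]
    (hcons : ∀ F : Set (Set X), ScottOpenFamily F → ∀ U ∈ F,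
      ∃ Q : Set X, IsCompact Q ∧ IsSaturatedSet Q ∧ Q ⊆ U ∧
        {V : Set X | IsOpen V ∧ Q ⊆ V} ⊆ F)
    (ν : Set X → ENNReal) (hν : ScottContOnOpens ν) : TightMap ν := by
  intro U hU r hr
  rcases hr with rfl | hr
  · exact ⟨∅, isCompact_empty, fun x hx => hx.elim, empty_subset _, zero_le⟩
  · set F : Set (Set X) := {V | IsOpen V ∧ r < ν V} with hF
    have hFscott : ScottOpenFamily F := by
      refine ⟨fun V hV => hV.1, fun V W hV hW hVF hsub => ⟨hW, lt_of_lt_of_le hVF.2 (hν.1 V W hV hW hsub)⟩, ?_⟩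
      intro S hSne hSopen hSdir hUnion
      have := hν.2 S hSne hSopen hSdir
      have h2 : r < ⨆ U ∈ S, ν U := this ▸ hUnion.2
      obtain ⟨V, hVr⟩ := lt_iSup_iff.mp h2
      obtain ⟨hVS', hVr'⟩ := lt_iSup_iff.mp hVr
      exact ⟨V, hVS', hSopen V hVS', hVr'⟩
    obtain ⟨Q, hQc, hQs, hQU, hQF⟩ := hcons F hFscott U ⟨hU, hr⟩
    refine ⟨Q, hQc, hQs, hQU, ?_⟩
    apply le_iInf; intro V; apply le_iInf; intro hV
    exact le_of_lt (hQF hV).2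
end

section
/- Let X be a sober topological space, A a saturated subset of X, and C a closed subset of X. Then the subspace A ∩ C is sober. -/
open Set

universe u v

/-- in a sober space, the intersection of a saturated set and a closed set
is sober as a subspace. -/
theorem stmt16 {X : Type u} [TopologicalSpace X] [T0Space X] [QuasiSober X]
    (A C : Set X) (hA : IsSaturatedSet A) (hC : IsClosed C) :
    QuasiSober ↥(A ∩ C) ∧ T0Space ↥(A ∩ C) := by
  refine ⟨⟨fun {S} hS hScl => ?_⟩, inferInstance⟩
  set T : Set X := closure (Subtype.val '' S) with hT
  have hTirr : IsIrreducible T := (hS.image _ continuous_subtype_val.continuousOn).closure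
  obtain ⟨x, hx⟩ := QuasiSober.sober hTirr isClosed_closure
  have hxT : x ∈ T := hx ▸ subset_closure rfl
  have hxC : x ∈ C := by
    have : T ⊆ C := closure_minimal (by rintro _ ⟨a, -, rfl⟩; exact a.2.2) hC
    exact this hxT
  obtain ⟨a, ha⟩ := hS.nonempty
  have haT : (a : X) ∈ T := subset_closure ⟨a, ha, rfl⟩
  have hxA : x ∈ A := by
    refine hA a a.2.1 x fun U hU haU => ?_
    rw [← hx] at haT
    obtain ⟨y, hyU, hy⟩ := mem_closure_iff.mp haT U hU haU
    rwa [mem_singleton_iff.mp hy] at hyU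
  refine ⟨⟨x, hxA, hxC⟩, ?_⟩
  -- closure of {x} in subtype equals S
  obtain ⟨F, hFcl, hFS⟩ := isClosed_induced_iff.mp hScl
  have hTF : T ⊆ F := closure_minimal (by
    rintro _ ⟨a, haS, rfl⟩
    have : a ∈ Subtype.val ⁻¹' F := hFS ▸ haS
    exact this) hFcl
  show closure {(⟨x, hxA, hxC⟩ : ↥(A ∩ C))} = S
  ext q
  rw [closure_subtype]
  constructor
  · intro hq
    have hqT : (q : X) ∈ T := by
      have : closure {x} ⊆ T := hx ▸ subset_rfl
      refine this ?_
      simpa using hq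
    have : q ∈ Subtype.val ⁻¹' F := hTF hqT
    exact hFS ▸ this
  · intro hqS
    have hqT : (q : X) ∈ T := subset_closure ⟨q, hqS, rfl⟩
    rw [← hx] at hqT
    simpa using hqT
end

section
/- (Steenrod's lemma on opens) Let Q, (p_i)_{i∈I} be the canonical projective limit of a projective system (p_{ij} : Q_j → Q_i)_{i⊑j∈I} of compact sober spaces. For every i ∈ I and every open neighborhood U of ↑p_i[Q] in Q_i, there exists j ⊒ i with ↑p_{ij}[Q_j] ⊆ U. -/
open Set

universe u v

section Steenrod

variable {I : Type u} [Preorder I] [IsDirected I (· ≤ ·)]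
    {X : I → Type v} [∀ i, TopologicalSpace (X i)]
    [∀ i, CompactSpace (X i)] [∀ i, T0Space (X i)] [∀ i, QuasiSober (X i)]
    (p : ∀ i j : I, i ≤ j → X j → X i)

/-- Compatible family of nonempty closed subsets. -/
def StCompat (Z : ∀ l, Set (X l)) : Prop :=
  (∀ l, IsClosed (Z l)) ∧ (∀ l, (Z l).Nonempty) ∧
    ∀ (l k : I) (h : l ≤ k), ∀ y ∈ Z k, p l k h y ∈ Z l

/-- Slices of a subset of the sigma type. -/
def stSl (A : Set (Σ l, X l)) (l : I) : Set (X l) := {x | Sigma.mk l x ∈ A}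

variable (hpcont : ∀ (i j : I) (h : i ≤ j), Continuous (p i j h))
    (hpid : ∀ (i : I) (x : X i), p i i le_rfl x = x)
    (hpcomp : ∀ (i j k : I) (hij : i ≤ j) (hjk : j ≤ k) (x : X k),
      p i j hij (p j k hjk x) = p i k (hij.trans hjk) x)

section Shrink

variable {p} {Z : ∀ l, Set (X l)} (hZ : StCompat p Z)
  (hmin : ∀ Y : ∀ l, Set (X l), StCompat p Y → (∀ l, Y l ⊆ Z l) → ∀ l, Z l ⊆ Y l)

include hpcont hpcomp hZ hmin in
theorem st_shrink (j : I) (S : ∀ l, Set (X l))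
    (hS1 : ∀ k, j ≤ k → S k ⊆ Z k)
    (hS2 : ∀ k, j ≤ k → (S k).Nonempty)
    (hS3 : ∀ (k k' : I) (h : k ≤ k'), j ≤ k → ∀ y ∈ S k', p k k' h y ∈ S k) :
    ∀ (k : I) (h : j ≤ k), Z j ⊆ closure (p j k h '' S k) := by
  classical
  set Y : ∀ l, Set (X l) :=
    fun l => ⋂ (k : {k : I // l ≤ k ∧ j ≤ k}), closure (p l k.1 k.2.1 '' S k.1) with hYdef
  -- index type nonempty
  have hidx : ∀ l : I, Nonempty {k : I // l ≤ k ∧ j ≤ k} := by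
    intro l
    obtain ⟨m, hm1, hm2⟩ := directed_of (· ≤ ·) l j
    exact ⟨⟨m, hm1, hm2⟩⟩
  -- antitonicity of the terms
  have hmono : ∀ (l k k' : I) (hlk : l ≤ k) (hjk : j ≤ k) (hkk' : k ≤ k'),
      closure (p l k' (hlk.trans hkk') '' S k') ⊆ closure (p l k hlk '' S k) := by
    intro l k k' hlk hjk hkk'
    apply closure_mono
    rintro _ ⟨y, hy, rfl⟩
    rw [← hpcomp l k k' hlk hkk' y]
    exact ⟨p k k' hkk' y, hS3 k k' hkk' hjk y hy, rfl⟩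
  have hdir : ∀ l : I, Directed (· ⊇ ·)
      (fun k : {k : I // l ≤ k ∧ j ≤ k} => closure (p l k.1 k.2.1 '' S k.1)) := by
    intro l a b
    obtain ⟨m, hm1, hm2⟩ := directed_of (· ≤ ·) a.1 b.1
    refine ⟨⟨m, a.2.1.trans hm1, a.2.2.trans hm1⟩, ?_, ?_⟩
    · exact hmono l a.1 m a.2.1 a.2.2 hm1
    · exact hmono l b.1 m b.2.1 b.2.2 hm2
  have hYcl : ∀ l, IsClosed (Y l) := fun l => isClosed_iInter fun _ => isClosed_closure
  have hYne : ∀ l, (Y l).Nonempty := by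
    intro l
    have := hidx l
    apply IsCompact.nonempty_iInter_of_directed_nonempty_isCompact_isClosed _ (hdir l)
    · intro k
      obtain ⟨y, hy⟩ := hS2 k.1 k.2.2
      exact ⟨p l k.1 k.2.1 y, subset_closure ⟨y, hy, rfl⟩⟩
    · intro k; exact isClosed_closure.isCompact
    · intro k; exact isClosed_closure
  have hYsub : ∀ l, Y l ⊆ Z l := by
    intro l
    obtain ⟨k⟩ := hidx l
    refine (iInter_subset _ k).trans ?_
    have : closure (p l k.1 k.2.1 '' S k.1) ⊆ closure (Z l) := by
      apply closure_mono
      rintro _ ⟨y, hy, rfl⟩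
      exact hZ.2.2 l k.1 k.2.1 y (hS1 k.1 k.2.2 hy)
    exact this.trans (hZ.1 l).closure_subset
  have hYcompat : StCompat p Y := by
    refine ⟨hYcl, hYne, ?_⟩
    intro l l' hll' x hx
    apply mem_iInter.2
    rintro ⟨k, hlk, hjk⟩
    obtain ⟨m, hm1, hm2⟩ := directed_of (· ≤ ·) k l'
    have hjm : j ≤ m := hjk.trans hm1
    have hx' : x ∈ closure (p l' m hm2 '' S m) :=
      mem_iInter.1 hx ⟨m, hm2, hjm⟩
    have h1 : p l l' hll' x ∈ closure (p l l' hll' '' (p l' m hm2 '' S m)) :=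
      image_closure_subset_closure_image (hpcont l l' hll') ⟨x, hx', rfl⟩
    refine (closure_mono ?_) h1
    rintro _ ⟨_, ⟨y, hy, rfl⟩, rfl⟩
    rw [hpcomp l l' m hll' hm2 y, ← hpcomp l k m hlk hm1 y]
    exact ⟨p k m hm1 y, hS3 k m hm1 hjk y hy, rfl⟩
  intro k hk
  have := hmin Y hYcompat hYsub j
  refine this.trans ?_
  exact iInter_subset (fun k : {k : I // j ≤ k ∧ j ≤ k} =>
    closure (p j k.1 k.2.1 '' S k.1)) ⟨k, hk, hk⟩

include hpcont hpcomp hZ hmin in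
theorem st_dense : ∀ (j k : I) (h : j ≤ k), closure (p j k h '' Z k) = Z j := by
  intro j k h
  apply subset_antisymm
  · refine subset_trans (closure_mono ?_) (hZ.1 j).closure_subset
    rintro _ ⟨y, hy, rfl⟩
    exact hZ.2.2 j k h y hy
  · exact st_shrink hpcont hpcomp hZ hmin j Z (fun _ _ => subset_rfl) (fun k _ => hZ.2.1 k)
      (fun k k' hkk' _ y hy => hZ.2.2 k k' hkk' y hy) k h

include hpcont hpid hpcomp hZ hmin in
theorem st_irred : ∀ j, IsIrreducible (Z j) := by
  classical
  intro j
  refine ⟨hZ.2.1 j, ?_⟩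
  intro u v hu hv ⟨a, haZ, hau⟩ ⟨b, hbZ, hbv⟩
  by_contra hne
  have hempty : ∀ x ∈ Z j, x ∈ u → x ∉ v := by
    intro x hx hxu hxv
    exact hne ⟨x, hx, hxu, hxv⟩
  set S : ∀ l, Set (X l) := fun l =>
    if h : j ≤ l then Z l ∩ p j l h ⁻¹' uᶜ else Z l with hSdef
  have hSeq : ∀ (k : I) (h : j ≤ k), S k = Z k ∩ p j k h ⁻¹' uᶜ := by
    intro k h; simp only [hSdef, dif_pos h]
  have hS1 : ∀ k, j ≤ k → S k ⊆ Z k := by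
    intro k h; rw [hSeq k h]; exact inter_subset_left
  have hS2 : ∀ k, j ≤ k → (S k).Nonempty := by
    intro k h
    rw [hSeq k h]
    by_contra hemp
    rw [not_nonempty_iff_eq_empty] at hemp
    -- then p j k '' Z k ⊆ Z j ∩ u ⊆ vᶜ
    have hsub : p j k h '' Z k ⊆ vᶜ := by
      rintro _ ⟨y, hy, rfl⟩
      have hyu : p j k h y ∈ u := by
        by_contra hyu
        have hmem : y ∈ Z k ∩ p j k h ⁻¹' uᶜ := ⟨hy, hyu⟩
        rw [hemp] at hmem
        exact absurd hmem (notMem_empty y)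
      exact hempty _ (hZ.2.2 j k h y hy) hyu
    have : Z j ⊆ vᶜ := by
      rw [← st_dense hpcont hpcomp hZ hmin j k h]
      exact closure_minimal hsub (hv.isClosed_compl)
    exact this hbZ hbv
  have hS3 : ∀ (k k' : I) (h : k ≤ k'), j ≤ k → ∀ y ∈ S k', p k k' h y ∈ S k := by
    intro k k' h hjk y hy
    have hjk' : j ≤ k' := hjk.trans h
    rw [hSeq k' hjk'] at hy
    rw [hSeq k hjk]
    refine ⟨hZ.2.2 k k' h y hy.1, ?_⟩
    have := hy.2
    simp only [mem_preimage, mem_compl_iff] at this ⊢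
    rw [hpcomp j k k' hjk h y]
    exact this
  have := st_shrink hpcont hpcomp hZ hmin j S hS1 hS2 hS3 j le_rfl
  have himg : p j j le_rfl '' S j = S j := by
    ext x
    constructor
    · rintro ⟨y, hy, rfl⟩; rwa [hpid j y]
    · intro hx; exact ⟨x, hx, hpid j x⟩
  rw [himg, hSeq j le_rfl] at this
  have : Z j ⊆ uᶜ := by
    refine this.trans (closure_minimal ?_ hu.isClosed_compl)
    intro x hx
    have := hx.2
    rwa [mem_preimage, hpid j x] at this
  exact this haZ hau

end Shrink

include hpcont hpid hpcomp in
/-- Steenrod's theorem with constraints: a compatible family of nonempty closed sets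
contains a point of the projective limit. -/
theorem st_key (Z₀ : ∀ l, Set (X l)) (h₀ : StCompat p Z₀) :
    ∃ x : projLim X p, ∀ l, x.1 l ∈ Z₀ l := by
  classical
  -- Zorn's lemma on sigma-encoded families
  set 𝒮 : Set (Set (Σ l, X l)) :=
    {A | StCompat p (stSl A) ∧ ∀ l, stSl A l ⊆ Z₀ l} with h𝒮
  have hA₀ : {q : Σ l, X l | q.2 ∈ Z₀ q.1} ∈ 𝒮 := by
    constructor
    · exact ⟨h₀.1, h₀.2.1, h₀.2.2⟩
    · intro l; exact fun x hx => hx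
  have hlb : ∀ c ⊆ 𝒮, IsChain (· ⊆ ·) c → c.Nonempty →
      ∃ lb ∈ 𝒮, ∀ s ∈ c, lb ⊆ s := by
    intro c hc hchain hcne
    refine ⟨⋂₀ c, ⟨⟨?_, ?_, ?_⟩, ?_⟩, fun s hs => sInter_subset_of_mem hs⟩
    · intro l
      have : stSl (⋂₀ c) l = ⋂ s : c, stSl s.1 l := by
        ext x; simp [stSl, mem_sInter]
      rw [this]
      exact isClosed_iInter fun s => ((hc s.2).1.1 l)
    · intro l
      have heq : stSl (⋂₀ c) l = ⋂ s : c, stSl s.1 l := by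
        ext x; simp [stSl, mem_sInter]
      rw [heq]
      have : Nonempty c := hcne.to_subtype
      apply IsCompact.nonempty_iInter_of_directed_nonempty_isCompact_isClosed
      · intro s t
        rcases eq_or_ne s.1 t.1 with h | h
        · refine ⟨s, subset_rfl, ?_⟩
          show stSl s.1 l ⊆ stSl t.1 l
          rw [h]
        · rcases hchain s.2 t.2 h with h' | h'
          · exact ⟨s, subset_rfl, fun x hx => h' hx⟩
          · exact ⟨t, fun x hx => h' hx, subset_rfl⟩
      · intro s; exact (hc s.2).1.2.1 l
      · intro s; exact ((hc s.2).1.1 l).isCompact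
      · intro s; exact (hc s.2).1.1 l
    · intro l k h y hy
      intro s hs
      exact (hc hs).1.2.2 l k h y (hy s hs)
    · intro l
      obtain ⟨s, hs⟩ := hcne
      exact fun x hx => (hc hs).2 l (hx s hs)
  obtain ⟨m, -, hm⟩ := zorn_superset_nonempty 𝒮 hlb _ hA₀
  -- minimal element m
  obtain ⟨⟨hmZ, hmZ₀⟩, hmmin⟩ := hm
  set Z : ∀ l, Set (X l) := stSl m with hZdef
  have hmin : ∀ Y : ∀ l, Set (X l), StCompat p Y → (∀ l, Y l ⊆ Z l) → ∀ l, Z l ⊆ Y l := by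
    intro Y hY hYZ l
    have hYm : {q : Σ l, X l | q.2 ∈ Y q.1} ⊆ m := fun q hq => hYZ q.1 hq
    have hY𝒮 : {q : Σ l, X l | q.2 ∈ Y q.1} ∈ 𝒮 := by
      refine ⟨⟨hY.1, hY.2.1, hY.2.2⟩, fun l' => ?_⟩
      exact fun x hx => hmZ₀ l' (hYZ l' hx)
    have := hmmin hY𝒮 hYm
    exact fun x hx => this hx
  -- generic points
  have hirr := st_irred hpcont hpid hpcomp hmZ hmin
  have hdense := st_dense hpcont hpcomp hmZ hmin
  have hgen : ∀ l, ∃ x : X l, IsGenericPoint x (Z l) := by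
    intro l
    exact QuasiSober.sober (hirr l) (hmZ.1 l)
  choose x hx using hgen
  have hcompat : ∀ (l k : I) (h : l ≤ k), p l k h (x k) = x l := by
    intro l k h
    have h1 : IsGenericPoint (p l k h (x k)) (closure (p l k h '' Z k)) :=
      (hx k).image (hpcont l k h)
    rw [hdense l k h] at h1
    exact h1.eq (hx l)
  exact ⟨⟨x, hcompat⟩, fun l => hmZ₀ l ((hx l).mem)⟩

end Steenrod

/-- Steenrod's lemma on opens: in the canonical projective limit Q of a
projective system of compact sober spaces, every open neighborhood U of ↑p_i[Q] in Q_i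
contains ↑p_{ij}[Q_j] for some j above i. -/
theorem stmt17 {I : Type u} [Preorder I] [IsDirected I (· ≤ ·)] [Nonempty I]
    (X : I → Type v) [∀ i, TopologicalSpace (X i)]
    [∀ i, CompactSpace (X i)] [∀ i, T0Space (X i)] [∀ i, QuasiSober (X i)]
    (p : ∀ i j : I, i ≤ j → X j → X i)
    (hpcont : ∀ (i j : I) (h : i ≤ j), Continuous (p i j h))
    (hpid : ∀ (i : I) (x : X i), p i i le_rfl x = x)
    (hpcomp : ∀ (i j k : I) (hij : i ≤ j) (hjk : j ≤ k) (x : X k),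
      p i j hij (p j k hjk x) = p i k (hij.trans hjk) x)
    (i : I) (U : Set (X i)) (hU : IsOpen U)
    (hsub : upClo (Set.range fun x : projLim X p => x.1 i) ⊆ U) :
    ∃ j : I, ∃ h : i ≤ j, upClo (Set.range (p i j h)) ⊆ U := by
  classical
  have upClo_sub : ∀ (A : Set (X i)), A ⊆ U → upClo A ⊆ U := by
    intro A hA y hy
    obtain ⟨x, hxA, hxy⟩ := hy
    exact hxy U hU (hA hxA)
  by_cases hne : ∀ k, Nonempty (X k)
  · by_contra hcon
    push_neg at hcon
    have hfib : ∀ (j : I) (h : i ≤ j), (p i j h ⁻¹' Uᶜ).Nonempty := by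
      intro j h
      by_contra hemp
      rw [not_nonempty_iff_eq_empty] at hemp
      apply hcon j h
      apply upClo_sub
      rintro _ ⟨y, rfl⟩
      by_contra hyU
      have : y ∈ p i j h ⁻¹' Uᶜ := hyU
      rw [hemp] at this
      exact absurd this (notMem_empty y)
    set Z₀ : ∀ l, Set (X l) := fun l => if h : i ≤ l then p i l h ⁻¹' Uᶜ else univ with hZ₀
    have hZ₀eq : ∀ (l : I) (h : i ≤ l), Z₀ l = p i l h ⁻¹' Uᶜ := by
      intro l h; simp only [hZ₀, dif_pos h]
    have hcompat : StCompat p Z₀ := by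
      refine ⟨?_, ?_, ?_⟩
      · intro l
        by_cases h : i ≤ l
        · rw [hZ₀eq l h]
          exact hU.isClosed_compl.preimage (hpcont i l h)
        · simp only [hZ₀, dif_neg h]; exact isClosed_univ
      · intro l
        by_cases h : i ≤ l
        · rw [hZ₀eq l h]; exact hfib l h
        · simp only [hZ₀, dif_neg h]
          have := hne l
          exact univ_nonempty
      · intro l k h y hy
        by_cases hil : i ≤ l
        · rw [hZ₀eq k (hil.trans h)] at hy
          rw [hZ₀eq l hil, mem_preimage, hpcomp i l k hil h y]
          exact hy
        · simp only [hZ₀, dif_neg hil]; trivial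
    obtain ⟨x, hxmem⟩ := st_key p hpcont hpid hpcomp Z₀ hcompat
    have hmem := hxmem i
    rw [hZ₀eq i le_rfl, mem_preimage, hpid i (x.1 i)] at hmem
    exact hmem (hsub ⟨x.1 i, ⟨x, rfl⟩, fun V _ hV => hV⟩)
  · push_neg at hne
    obtain ⟨k, hk⟩ := hne
    replace hk : IsEmpty (X k) := hk
    obtain ⟨m, hm1, hm2⟩ := directed_of (· ≤ ·) i k
    refine ⟨m, hm1, upClo_sub _ ?_⟩
    rintro _ ⟨y, rfl⟩
    exact (hk.false (p k m hm2 y)).elim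
end

section
/- Let Y be a locally compact sober space and μ a bounded Borel measure on Y whose restriction to open sets is Scott-continuous (τ-smooth). For every Gδ subset E of Y and every ε > 0, there exists a compact saturated Gδ subset Q of Y with Q ⊆ E and μ(Q) > μ(E) − ε. -/
open Set

universe u v

theorem hm {Y : Type*} [TopologicalSpace Y] [QuasiSober Y]
    (Q : ℕ → Set Y) (hc : ∀ n, IsCompact (Q n))
    (hs : ∀ n, ∀ x ∈ Q n, ∀ y, (∀ U : Set Y, IsOpen U → x ∈ U → y ∈ U) → y ∈ Q n)
    (ha : ∀ n m, n ≤ m → Q m ⊆ Q n)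
    (W : Set Y) (hW : IsOpen W) (hKW : (⋂ n, Q n) ⊆ W) : ∃ n, Q n ⊆ W := by
  by_contra h
  push_neg at h
  set S : Set (Set Y) := {C | IsClosed C ∧ C ⊆ Wᶜ ∧ ∀ n, (Q n ∩ C).Nonempty} with hS
  have hWc : Wᶜ ∈ S := by
    refine ⟨hW.isClosed_compl, Subset.rfl, fun n => ?_⟩
    obtain ⟨x, hx1, hx2⟩ := not_subset.1 (h n)
    exact ⟨x, hx1, hx2⟩
  obtain ⟨m, -, hmS, hmin⟩ : ∃ m, m ⊆ Wᶜ ∧ Minimal (· ∈ S) m := by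
    refine zorn_superset_nonempty S ?_ _ hWc
    rintro c hcS hchain ⟨c0, hc0⟩
    classical
    have key : ∀ u : Finset ↥c, u.Nonempty → ∃ C ∈ u, ∀ i ∈ u, (C : Set Y) ⊆ i := by
      intro u
      induction u using Finset.induction with
      | empty => intro hu; exact absurd hu (by simp)
      | @insert a u hau ih =>
        intro _
        rcases u.eq_empty_or_nonempty with rfl | hu'
        · exact ⟨a, by simp⟩
        · obtain ⟨C, hCu, hCmin⟩ := ih hu'
          rcases hchain.total C.2 a.2 with h1 | h1
          · exact ⟨C, Finset.mem_insert_of_mem hCu, fun i hi => by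
              rcases Finset.mem_insert.1 hi with rfl | hi
              · exact h1
              · exact hCmin i hi⟩
          · exact ⟨a, Finset.mem_insert_self _ _, fun i hi => by
              rcases Finset.mem_insert.1 hi with rfl | hi
              · exact Subset.rfl
              · exact h1.trans (hCmin i hi)⟩
    refine ⟨⋂₀ c, ⟨isClosed_sInter fun C hC => (hcS hC).1,
      (sInter_subset_of_mem hc0).trans (hcS hc0).2.1, fun n => ?_⟩,
      fun s hs => sInter_subset_of_mem hs⟩
    rw [sInter_eq_iInter]
    refine (hc n).inter_iInter_nonempty _ (fun C => (hcS C.2).1) fun u => ?_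
    rcases u.eq_empty_or_nonempty with rfl | hu
    · simpa using ((hcS hc0).2.2 n).mono inter_subset_left
    · obtain ⟨C, hCu, hCmin⟩ := key u hu
      refine ((hcS C.2).2.2 n).mono (inter_subset_inter_right _ ?_)
      exact subset_iInter₂ fun i hi => hCmin i hi
  -- m is irreducible
  have hmne : m.Nonempty := ((hmS.2.2 0).mono inter_subset_right)
  have hirr : IsIrreducible m := by
    refine ⟨hmne, fun u v hu hv hmu hmv => ?_⟩
    by_contra hempty
    rw [not_nonempty_iff_eq_empty] at hempty
    have hsub : m ⊆ uᶜ ∪ vᶜ := by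
      intro x hx
      by_contra hx'
      simp only [mem_union, mem_compl_iff, not_or, not_not] at hx'
      exact absurd (by exact ⟨hx, hx'.1, hx'.2⟩ : x ∈ m ∩ (u ∩ v)) (by rw [hempty]; exact notMem_empty x)
    have hcase : (m ∩ uᶜ) ∈ S ∨ (m ∩ vᶜ) ∈ S := by
      by_contra hno
      push_neg at hno
      have h1 : ∃ a, (Q a ∩ (m ∩ uᶜ)) = ∅ := by
        by_contra h1
        push_neg at h1
        exact hno.1 ⟨hmS.1.inter (hu.isClosed_compl), inter_subset_left.trans hmS.2.1,
          fun n => h1 n⟩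
      have h2 : ∃ b, (Q b ∩ (m ∩ vᶜ)) = ∅ := by
        by_contra h2
        push_neg at h2
        exact hno.2 ⟨hmS.1.inter (hv.isClosed_compl), inter_subset_left.trans hmS.2.1,
          fun n => h2 n⟩
      obtain ⟨a, ha'⟩ := h1
      obtain ⟨b, hb'⟩ := h2
      obtain ⟨x, hxQ, hxm⟩ := hmS.2.2 (max a b)
      rcases hsub hxm with hxu | hxv
      · have hx1 : x ∈ Q a ∩ (m ∩ uᶜ) := ⟨ha _ _ (le_max_left a b) hxQ, hxm, hxu⟩
        rw [ha'] at hx1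
        exact hx1
      · have hx1 : x ∈ Q b ∩ (m ∩ vᶜ) := ⟨ha _ _ (le_max_right a b) hxQ, hxm, hxv⟩
        rw [hb'] at hx1
        exact hx1
    rcases hcase with hC | hC
    · obtain ⟨x, hxm, hxu⟩ := hmu
      exact ((hmin hC inter_subset_left) hxm).2 hxu
    · obtain ⟨x, hxm, hxv⟩ := hmv
      exact ((hmin hC inter_subset_left) hxm).2 hxv
  obtain ⟨x, hx⟩ := QuasiSober.sober hirr hmS.1
  have hxQ : ∀ n, x ∈ Q n := by
    intro n
    obtain ⟨y, hyQ, hym⟩ := hmS.2.2 n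
    refine hs n y hyQ x fun U hU hyU => ?_
    have : y ∈ closure ({x} : Set Y) := hx ▸ hym
    obtain ⟨z, hz1, hz2⟩ := mem_closure_iff.1 this U hU hyU
    rwa [← hz2]
  have hxW : x ∈ W := hKW (mem_iInter.2 hxQ)
  have hxm : x ∈ m := hx ▸ subset_closure (mem_singleton x)
  exact hmS.2.1 hxm hxW

private theorem stmt19_step {Y : Type u} [TopologicalSpace Y] [MeasurableSpace Y]
    (hlc : ∀ U : Set Y, IsOpen U → ∀ x ∈ U,
      ∃ Q : Set Y, IsCompact Q ∧ IsSaturatedSet Q ∧ Q ⊆ U ∧ x ∈ interior Q)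
    (μ : MeasureTheory.Measure Y) [MeasureTheory.IsFiniteMeasure μ]
    (hτ : ∀ S : Set (Set Y), S.Nonempty → (∀ U ∈ S, IsOpen U) → DirectedOn (· ⊆ ·) S →
      μ (⋃₀ S) = ⨆ U ∈ S, μ U)
    (W : Set Y) (hW : IsOpen W) (δ : ENNReal) (hδ : 0 < δ) :
    ∃ Q : Set Y, IsCompact Q ∧ IsSaturatedSet Q ∧ Q ⊆ W ∧ μ W ≤ μ (interior Q) + δ := by
  set T : Set (Set Y) := {Q | IsCompact Q ∧ IsSaturatedSet Q ∧ Q ⊆ W} with hT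
  have hTempty : (∅ : Set Y) ∈ T :=
    ⟨isCompact_empty, fun x hx => absurd hx (notMem_empty x), empty_subset _⟩
  set S : Set (Set Y) := (fun Q => interior Q) '' T with hSdef
  have hne : S.Nonempty := ⟨interior ∅, ∅, hTempty, rfl⟩
  have hop : ∀ V ∈ S, IsOpen V := by rintro V ⟨Q, -, rfl⟩; exact isOpen_interior
  have hdir : DirectedOn (· ⊆ ·) S := by
    rintro V1 ⟨Q1, hQ1, rfl⟩ V2 ⟨Q2, hQ2, rfl⟩
    refine ⟨interior (Q1 ∪ Q2), ⟨Q1 ∪ Q2, ⟨hQ1.1.union hQ2.1, ?_,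
      union_subset hQ1.2.2 hQ2.2.2⟩, rfl⟩,
      interior_mono subset_union_left, interior_mono subset_union_right⟩
    intro x hx y hxy
    rcases hx with hx | hx
    · exact Or.inl (hQ1.2.1 x hx y hxy)
    · exact Or.inr (hQ2.2.1 x hx y hxy)
  have hUnion : ⋃₀ S = W := by
    apply subset_antisymm
    · rintro x ⟨V, ⟨Q, hQ, rfl⟩, hx⟩
      exact hQ.2.2 (interior_subset hx)
    · intro x hx
      obtain ⟨Q, hQc, hQs, hQW, hxQ⟩ := hlc W hW x hx
      exact ⟨interior Q, ⟨Q, ⟨hQc, hQs, hQW⟩, rfl⟩, hxQ⟩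
  have hsup : μ W = ⨆ V ∈ S, μ V := by rw [← hUnion]; exact hτ S hne hop hdir
  by_cases hle : μ W ≤ δ
  · exact ⟨∅, hTempty.1, hTempty.2.1, hTempty.2.2, hle.trans le_add_self⟩
  · push_neg at hle
    have h1 : μ W - δ < μ W :=
      ENNReal.sub_lt_self (MeasureTheory.measure_ne_top μ W)
        (pos_of_gt hle).ne' hδ.ne'
    have h2 := h1.trans_le (le_of_eq hsup)
    simp only [lt_iSup_iff] at h2
    obtain ⟨V, ⟨Q, hQ, rfl⟩, hV⟩ := h2
    exact ⟨Q, hQ.1, hQ.2.1, hQ.2.2, tsub_le_iff_right.mp hV.le⟩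

open MeasureTheory

/-- on a locally compact sober space, a bounded τ-smooth Borel measure
inner-approximates every Gδ set by compact saturated Gδ subsets. -/
theorem stmt19 {Y : Type u} [TopologicalSpace Y] [MeasurableSpace Y] [BorelSpace Y]
    [T0Space Y] [QuasiSober Y]
    (hlc : ∀ U : Set Y, IsOpen U → ∀ x ∈ U,
      ∃ Q : Set Y, IsCompact Q ∧ IsSaturatedSet Q ∧ Q ⊆ U ∧ x ∈ interior Q)
    (μ : Measure Y) [IsFiniteMeasure μ]
    (hτ : ∀ S : Set (Set Y), S.Nonempty → (∀ U ∈ S, IsOpen U) → DirectedOn (· ⊆ ·) S →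
      μ (⋃₀ S) = ⨆ U ∈ S, μ U)
    (E : Set Y) (hE : IsGδ E) (ε : ENNReal) (hε : 0 < ε) :
    ∃ Q : Set Y, IsCompact Q ∧ IsSaturatedSet Q ∧ IsGδ Q ∧ Q ⊆ E ∧ μ E < μ Q + ε := by
  classical
  obtain ⟨U, hUopen, hUE⟩ := hE.eq_iInter_nat
  have hEsub : ∀ n, E ⊆ U n := fun n => hUE ▸ iInter_subset U n
  obtain ⟨ε', hε'pos, hε'sum⟩ := ENNReal.exists_pos_sum_of_countable hε.ne' ℕ
  have step := stmt19_step hlc μ hτ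
  choose f hf1 hf2 hf3 hf4 using step
  let Q : ℕ → Set Y := fun n => Nat.rec
    (f (U 0) (hUopen 0) (ε' 0) (ENNReal.coe_pos.2 (hε'pos 0)))
    (fun k Qk => f (interior Qk ∩ U (k+1)) (isOpen_interior.inter (hUopen (k+1)))
      (ε' (k+1)) (ENNReal.coe_pos.2 (hε'pos (k+1)))) n
  have hQ0 : Q 0 = f (U 0) (hUopen 0) (ε' 0) (ENNReal.coe_pos.2 (hε'pos 0)) := rfl
  have hQs : ∀ k, Q (k+1) = f (interior (Q k) ∩ U (k+1))
      (isOpen_interior.inter (hUopen (k+1))) (ε' (k+1))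
      (ENNReal.coe_pos.2 (hε'pos (k+1))) := fun k => rfl
  have hcomp : ∀ n, IsCompact (Q n) := by
    intro n; cases n with
    | zero => rw [hQ0]; exact hf1 _ _ _ _
    | succ k => rw [hQs k]; exact hf1 _ _ _ _
  have hsat : ∀ n, IsSaturatedSet (Q n) := by
    intro n; cases n with
    | zero => rw [hQ0]; exact hf2 _ _ _ _
    | succ k => rw [hQs k]; exact hf2 _ _ _ _
  have hQsub : ∀ k, Q (k+1) ⊆ interior (Q k) ∩ U (k+1) := by
    intro k; rw [hQs k]; exact hf3 _ _ _ _
  have hQU0 : Q 0 ⊆ U 0 := by rw [hQ0]; exact hf3 _ _ _ _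
  have hQmono : ∀ n m, n ≤ m → Q m ⊆ Q n := by
    intro n m hnm
    induction m with
    | zero => rw [Nat.le_zero.mp hnm]
    | succ k ih =>
      rcases Nat.lt_or_ge n (k+1) with h | h
      · exact ((hQsub k).trans inter_subset_left |>.trans interior_subset).trans
          (ih (Nat.lt_succ_iff.mp h))
      · rw [Nat.le_antisymm hnm h]
  set K : Set Y := ⋂ n, Q n with hK
  have hKV : K = ⋂ n, interior (Q n) := by
    apply subset_antisymm
    · intro x hx
      refine mem_iInter.2 fun n => ?_
      exact ((hQsub n) (mem_iInter.1 hx (n+1))).1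
    · intro x hx
      exact mem_iInter.2 fun n => interior_subset (mem_iInter.1 hx n)
  have hKcomp : IsCompact K := by
    rw [isCompact_iff_finite_subcover]
    intro ι V hV hcover
    obtain ⟨n, hn⟩ := hm Q hcomp hsat hQmono (⋃ i, V i) (isOpen_iUnion hV) hcover
    obtain ⟨t, ht⟩ := (hcomp n).elim_finite_subcover V hV hn
    exact ⟨t, (iInter_subset Q n).trans ht⟩
  have hKsat : IsSaturatedSet K := by
    intro x hx y hxy
    exact mem_iInter.2 fun n => hsat n x (mem_iInter.1 hx n) y hxy
  have hKGδ : IsGδ K := by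
    rw [hKV]
    exact IsGδ.iInter_of_isOpen fun n => isOpen_interior
  have hKE : K ⊆ E := by
    rw [hUE]
    refine subset_iInter fun n => ?_
    cases n with
    | zero => exact (iInter_subset Q 0).trans hQU0
    | succ k => exact (iInter_subset Q (k+1)).trans ((hQsub k).trans inter_subset_right)
  -- measure estimates
  have hd0 : μ (U 0 \ interior (Q 0)) ≤ ε' 0 := by
    rw [measure_diff (interior_subset.trans hQU0)
      isOpen_interior.measurableSet.nullMeasurableSet (measure_ne_top μ _)]
    refine tsub_le_iff_left.2 ?_
    rw [hQ0]
    exact hf4 _ _ _ _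
  have hds : ∀ k, μ ((interior (Q k) ∩ U (k+1)) \ interior (Q (k+1))) ≤ ε' (k+1) := by
    intro k
    have hss : interior (Q (k+1)) ⊆ interior (Q k) ∩ U (k+1) :=
      interior_subset.trans (hQsub k)
    rw [measure_diff hss isOpen_interior.measurableSet.nullMeasurableSet (measure_ne_top μ _)]
    refine tsub_le_iff_left.2 ?_
    conv_rhs => rw [hQs k]
    exact hf4 _ _ _ _
  set D : ℕ → Set Y := fun n => Nat.casesOn n (U 0 \ interior (Q 0))
    (fun k => (interior (Q k) ∩ U (k+1)) \ interior (Q (k+1))) with hD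
  have hDle : ∀ n, μ (D n) ≤ ε' n := by
    intro n; cases n with
    | zero => exact hd0
    | succ k => exact hds k
  have hcover : E \ K ⊆ ⋃ n, D n := by
    rintro x ⟨hxE, hxK⟩
    rw [hKV] at hxK
    have hex : ∃ n, x ∉ interior (Q n) := by
      by_contra hc
      push_neg at hc
      exact hxK (mem_iInter.2 hc)
    obtain ⟨n, hn, hnmin⟩ : ∃ n, x ∉ interior (Q n) ∧ ∀ m, m < n → x ∈ interior (Q m) := by
      refine ⟨Nat.find hex, Nat.find_spec hex, fun m hmlt => ?_⟩
      by_contra hm'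
      exact Nat.find_min hex hmlt hm'
    refine mem_iUnion.2 ⟨n, ?_⟩
    cases n with
    | zero => exact ⟨hEsub 0 hxE, hn⟩
    | succ k => exact ⟨⟨hnmin k (Nat.lt_succ_self k), hEsub (k+1) hxE⟩, hn⟩
  have hμdiff : μ (E \ K) < ε := by
    calc μ (E \ K) ≤ μ (⋃ n, D n) := measure_mono hcover
      _ ≤ ∑' n, μ (D n) := measure_iUnion_le D
      _ ≤ ∑' n, (ε' n : ENNReal) := ENNReal.tsum_le_tsum hDle
      _ < ε := hε'sum
  refine ⟨K, hKcomp, hKsat, hKGδ, hKE, ?_⟩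
  calc μ E ≤ μ (E ∩ K) + μ (E \ K) := measure_le_inter_add_diff μ E K
    _ ≤ μ K + μ (E \ K) := add_le_add_left (measure_mono inter_subset_right) _
    _ < μ K + ε := ENNReal.add_lt_add_left (measure_ne_top μ K) hμdiff
end
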